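/- arXiv:2404.09069 — 6 statements merged into one kernel-verified Lean document; each statement's English description precedes it below -/
import Mathlib

section
/- For any graph G with matching number at most ν and maximum degree at most Δ (where ν, Δ ≥ 1), the number of edges of G is at most νΔ + ⌊Δ/2⌋·⌊ν/⌈Δ/2⌉⌋, and in particular at most ν(Δ+1). -/
/-!
Write `f(a) = aΔ + ⌊Δ/2⌋⌊a/⌈Δ/2⌉⌋`; it is superadditive and `f(a) + Δ ≤ f(a + 1)`. We show
`e(G[s]) ≤ f(ν(G[s]))` by strong induction on the vertex set `s`. If `G[s]` splits into two parts
with no edges between them, the bounds for the parts add up. If deleting some vertex `v` lowers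
`ν`, then `e(G[s]) ≤ e(G[s - v]) + Δ`. Otherwise `G[s]` is connected and every vertex is missed
by some maximum matching, so by Gallai's lemma `|s| ≤ 2ν + 1`. Then `2e ≤ (2ν + 1)Δ`, which gives
`e ≤ νΔ + ⌊Δ/2⌋`, enough when `ν ≥ ⌈Δ/2⌉`; and when `ν < ⌈Δ/2⌉`, `2e ≤ (2ν + 1)2ν ≤ 2νΔ`.
-/

open Finset Function

def chvatalHansonBound (Δ a : ℕ) : ℕ := a * Δ + Δ / 2 * (a / ((Δ + 1) / 2))

namespace chvatalHansonBound

variable {Δ : ℕ}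

lemma mono : Monotone (chvatalHansonBound Δ) := fun _ _ h => by
  unfold chvatalHansonBound
  gcongr

lemma add_le (a b : ℕ) :
    chvatalHansonBound Δ a + chvatalHansonBound Δ b ≤ chvatalHansonBound Δ (a + b) := by
  unfold chvatalHansonBound
  have := Nat.mul_le_mul_left (Δ / 2)
    (Nat.div_add_div_le_add_div (x := a) (y := b) (z := (Δ + 1) / 2))
  rw [add_mul, mul_add] at *
  omega

lemma add_le_succ (a : ℕ) : chvatalHansonBound Δ a + Δ ≤ chvatalHansonBound Δ (a + 1) := by
  unfold chvatalHansonBound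
  have : a / ((Δ + 1) / 2) ≤ (a + 1) / ((Δ + 1) / 2) := by gcongr; omega
  have := Nat.mul_le_mul_left (Δ / 2) this
  rw [add_mul, one_mul]
  omega

/-- `e` counts the edges of a graph on `n ≤ 2a + 1` vertices with maximum degree `Δ`. -/
lemma le_of_card_le {e n a : ℕ} (hn : n ≤ 2 * a + 1) (hdeg : 2 * e ≤ n * Δ)
    (hcomplete : 2 * e ≤ n * (n - 1)) : e ≤ chvatalHansonBound Δ a := by
  unfold chvatalHansonBound
  have hΔ : 2 * e ≤ (2 * a + 1) * Δ := hdeg.trans (by gcongr)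
  by_cases hka : (Δ + 1) / 2 ≤ a
  · have : Δ / 2 ≤ Δ / 2 * (a / ((Δ + 1) / 2)) := by
      rcases Nat.eq_zero_or_pos Δ with rfl | hΔ
      · simp
      · exact Nat.le_mul_of_pos_right _ (Nat.div_pos hka (by omega))
    rw [show (2 * a + 1) * Δ = 2 * (a * Δ) + Δ by ring] at hΔ
    omega
  · have : n * (n - 1) ≤ Δ * (2 * a) := Nat.mul_le_mul (by omega) (by omega)
    have : 2 * e ≤ 2 * (a * Δ) := by linarith
    omega

lemma le_mul_succ (ν : ℕ) : chvatalHansonBound Δ ν ≤ ν * (Δ + 1) := by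
  unfold chvatalHansonBound
  have : Δ / 2 * (ν / ((Δ + 1) / 2)) ≤ ν :=
    calc Δ / 2 * (ν / ((Δ + 1) / 2)) ≤ ν / ((Δ + 1) / 2) * ((Δ + 1) / 2) := by
          rw [mul_comm]; gcongr; omega
      _ ≤ ν := Nat.div_mul_le_self _ _
  rw [mul_add_one]
  omega

end chvatalHansonBound

namespace SimpleGraph

variable {V : Type*}

/-- `G[s]`, kept on the whole vertex type: vertices outside `s` become isolated. -/
def restrictTo (G : SimpleGraph V) (s : Finset V) : SimpleGraph V where
  Adj u v := G.Adj u v ∧ u ∈ s ∧ v ∈ s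
  symm := ⟨fun _ _ h => ⟨h.1.symm, h.2.2, h.2.1⟩⟩
  loopless := ⟨fun v h => G.loopless.irrefl v h.1⟩

@[simp]
lemma restrictTo_adj {G : SimpleGraph V} {s : Finset V} {u v : V} :
    (G.restrictTo s).Adj u v ↔ G.Adj u v ∧ u ∈ s ∧ v ∈ s :=
  Iff.rfl

lemma restrictTo_le (G : SimpleGraph V) (s : Finset V) : G.restrictTo s ≤ G :=
  fun _ _ h => h.1

section EdgeCount

variable [Fintype V] [DecidableEq V] {G : SimpleGraph V} [DecidableRel G.Adj]

instance (s : Finset V) : DecidableRel (G.restrictTo s).Adj :=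
  fun u v => inferInstanceAs (Decidable (G.Adj u v ∧ u ∈ s ∧ v ∈ s))

variable (G) in
def edgesIn (s : Finset V) : ℕ := #(G.restrictTo s).edgeFinset

lemma edgesIn_univ : G.edgesIn univ = #G.edgeFinset := by
  rw [edgesIn]
  congr!
  ext
  simp

lemma two_mul_edgesIn (s : Finset V) :
    2 * G.edgesIn s = ∑ v ∈ s, (G.restrictTo s).degree v := by
  rw [edgesIn, ← sum_degrees_eq_twice_card_edges, ← sum_subset (subset_univ s)]
  intro v _ hv
  rw [degree, card_eq_zero, eq_empty_iff_forall_notMem]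
  simp [hv]

lemma two_mul_edgesIn_le_card_mul {Δ : ℕ} (hdeg : ∀ v, G.degree v ≤ Δ) (s : Finset V) :
    2 * G.edgesIn s ≤ #s * Δ := by
  rw [two_mul_edgesIn, ← smul_eq_mul, ← sum_const]
  exact sum_le_sum fun v _ => (degree_le_of_le (G.restrictTo_le s)).trans (hdeg v)

lemma two_mul_edgesIn_le_card_mul_pred (s : Finset V) :
    2 * G.edgesIn s ≤ #s * (#s - 1) := by
  rw [two_mul_edgesIn, ← smul_eq_mul, ← sum_const]
  refine sum_le_sum fun v hv => ?_
  rw [← card_erase_of_mem hv]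
  exact card_le_card fun w hw => by
    simp only [mem_neighborFinset, restrictTo_adj] at hw
    exact mem_erase.2 ⟨hw.1.ne', hw.2.2⟩

lemma edgesIn_le_edgesIn_erase_add {Δ : ℕ} (hdeg : ∀ v, G.degree v ≤ Δ) (s : Finset V) (v : V) :
    G.edgesIn s ≤ G.edgesIn (s.erase v) + Δ := by
  have hsub : (G.restrictTo s).edgeFinset ⊆
      (G.restrictTo (s.erase v)).edgeFinset ∪ (G.restrictTo s).incidenceFinset v := by
    intro e he
    induction e using Sym2.ind with
    | h a b =>
      simp only [mem_union, mem_edgeFinset, mem_edgeSet, restrictTo_adj, mem_erase,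
        mem_incidenceFinset, incidenceSet, Set.mem_ofPred_eq, Sym2.mem_iff] at he ⊢
      grind
  calc G.edgesIn s
      ≤ #(G.restrictTo (s.erase v)).edgeFinset + #((G.restrictTo s).incidenceFinset v) :=
        (card_le_card hsub).trans (card_union_le _ _)
    _ ≤ G.edgesIn (s.erase v) + Δ := by
        rw [card_incidenceFinset_eq_degree]
        exact Nat.add_le_add_left ((degree_le_of_le (G.restrictTo_le s)).trans (hdeg v)) _

lemma edgesIn_le_add_of_forall_not_adj {s t : Finset V}
    (hst : ∀ u ∈ t, ∀ v ∈ s \ t, ¬G.Adj u v) :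
    G.edgesIn s ≤ G.edgesIn t + G.edgesIn (s \ t) := by
  refine (card_le_card fun e he => ?_).trans (card_union_le _ _)
  induction e using Sym2.ind with
  | h a b =>
    simp only [mem_union, mem_edgeFinset, mem_edgeSet, restrictTo_adj, mem_sdiff] at he ⊢
    obtain ⟨hab, ha, hb⟩ := he
    by_cases hat : a ∈ t <;> by_cases hbt : b ∈ t
    · exact Or.inl ⟨hab, hat, hbt⟩
    · exact absurd hab (hst a hat b (mem_sdiff.2 ⟨hb, hbt⟩))
    · exact absurd hab.symm (hst b hbt a (mem_sdiff.2 ⟨ha, hat⟩))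
    · exact Or.inr ⟨hab, ⟨ha, hat⟩, hb, hbt⟩

end EdgeCount

/-- A matching of `G` with all its vertices in `s`, encoded as the involution `m` that exchanges
the two ends of each matching edge and fixes the unmatched vertices. -/
structure IsMatchingOn (G : SimpleGraph V) (s : Finset V) (m : V → V) : Prop where
  involutive : Involutive m
  adj : ∀ v, m v ≠ v → G.Adj v (m v)
  mem : ∀ v, m v ≠ v → v ∈ s

section Matching

variable {G : SimpleGraph V} {s t P : Finset V} {m n : V → V} {u v w : V}

lemma isMatchingOn_id : G.IsMatchingOn s id :=
  ⟨fun _ => rfl, fun _ h => absurd rfl h, fun _ h => absurd rfl h⟩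

lemma IsMatchingOn.mono (h : G.IsMatchingOn s m) (hst : s ⊆ t) : G.IsMatchingOn t m :=
  ⟨h.involutive, h.adj, fun v hv => hst (h.mem v hv)⟩

lemma IsMatchingOn.apply_eq_of_notMem (h : G.IsMatchingOn s m) (hv : v ∉ s) : m v = v := by
  by_contra hmv
  exact hv (h.mem v hmv)

lemma IsMatchingOn.apply_mem (h : G.IsMatchingOn s m) (hv : v ∈ s) : m v ∈ s := by
  by_cases hmv : m v = v
  · rwa [hmv]
  · exact h.mem (m v) (by rw [h.involutive v]; exact Ne.symm hmv)

lemma IsMatchingOn.piecewise [DecidableEq V] (hn : G.IsMatchingOn s n) (hm : G.IsMatchingOn s m)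
    (hnP : ∀ v ∈ P, n v ∈ P) (hmP : ∀ v ∈ P, m v ∈ P) : G.IsMatchingOn s (P.piecewise n m) := by
  have hmP' : ∀ v ∉ P, m v ∉ P := fun v hv hmv => hv (hm.involutive v ▸ hmP _ hmv)
  refine ⟨fun v => ?_, fun v => ?_, fun v => ?_⟩ <;> by_cases hv : v ∈ P
  · simp [hv, hnP v hv, hn.involutive v]
  · simp [hv, hmP' v hv, hm.involutive v]
  all_goals simp only [Finset.piecewise, hv, if_true, if_false]
  · exact hn.adj v
  · exact hm.adj v
  · exact hn.mem v
  · exact hm.mem v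

lemma isMatchingOn_swap [DecidableEq V] (hadj : G.Adj u w) (hu : u ∈ s) (hw : w ∈ s) :
    G.IsMatchingOn s (Equiv.swap u w) := by
  have huw : ∀ v, Equiv.swap u w v ≠ v → v = u ∨ v = w := fun v hv => by
    by_contra! h
    exact hv (Equiv.swap_apply_of_ne_of_ne h.1 h.2)
  refine ⟨Equiv.swap_apply_self u w, fun v hv => ?_, fun v hv => ?_⟩ <;>
    rcases huw v hv with rfl | rfl <;> simp [hadj.symm, *]

variable [Fintype V] [DecidableEq V]

def matchedVerts (m : V → V) : Finset V := {v | m v ≠ v}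

@[simp]
lemma mem_matchedVerts : v ∈ matchedVerts m ↔ m v ≠ v := by
  simp [matchedVerts]

lemma IsMatchingOn.matchedVerts_subset (h : G.IsMatchingOn s m) : matchedVerts m ⊆ s :=
  fun v hv => h.mem v (mem_matchedVerts.1 hv)

lemma card_matchedVerts_eq_two_mul (hm : Involutive m) :
    #(matchedVerts m) = 2 * #((matchedVerts m).image fun v => s(v, m v)) := by
  rw [card_eq_sum_card_image (fun v => s(v, m v)), mul_comm, ← smul_eq_mul, ← sum_const]
  refine sum_congr rfl fun e he => ?_
  obtain ⟨v, hv, rfl⟩ := mem_image.1 he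
  rw [mem_matchedVerts] at hv
  have : {x ∈ matchedVerts m | s(x, m x) = s(v, m v)} = {v, m v} := by
    ext x
    simp only [mem_filter, mem_matchedVerts, mem_insert, mem_singleton, Sym2.eq_iff]
    constructor
    · rintro ⟨-, ⟨rfl, -⟩ | ⟨rfl, -⟩⟩ <;> simp
    · rintro (rfl | rfl)
      · exact ⟨hv, Or.inl ⟨rfl, rfl⟩⟩
      · rw [hm v]
        exact ⟨Ne.symm hv, Or.inr ⟨rfl, rfl⟩⟩
  rw [this, card_pair (Ne.symm hv)]

lemma matchedVerts_piecewise :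
    matchedVerts (P.piecewise n m) = (matchedVerts n ∩ P) ∪ (matchedVerts m \ P) := by
  ext v
  by_cases hv : v ∈ P <;> simp [piecewise, hv]

lemma card_matchedVerts_piecewise :
    #(matchedVerts (P.piecewise n m)) = #(matchedVerts n ∩ P) + #(matchedVerts m \ P) := by
  rw [matchedVerts_piecewise, card_union_of_disjoint]
  exact Finset.disjoint_left.2 fun v h1 h2 => (mem_sdiff.1 h2).2 (mem_inter.1 h1).2

variable (G) in
/-- Twice the matching number of `G[s]`. -/
noncomputable def maxMatched (s : Finset V) : ℕ :=
  sSup {k | ∃ m, G.IsMatchingOn s m ∧ #(matchedVerts m) = k}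

variable (G) in
def IsMaxMatchingOn (s : Finset V) (m : V → V) : Prop :=
  G.IsMatchingOn s m ∧ #(matchedVerts m) = G.maxMatched s

lemma bddAbove_card_matchedVerts :
    BddAbove {k | ∃ m, G.IsMatchingOn s m ∧ #(matchedVerts m) = k} :=
  ⟨Fintype.card V, by rintro _ ⟨m, -, rfl⟩; exact card_le_univ _⟩

lemma IsMatchingOn.card_le_maxMatched (h : G.IsMatchingOn s m) :
    #(matchedVerts m) ≤ G.maxMatched s :=
  le_csSup bddAbove_card_matchedVerts ⟨m, h, rfl⟩

variable (G s) in
lemma exists_isMaxMatchingOn : ∃ m, G.IsMaxMatchingOn s m := by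
  obtain ⟨m, hm, hcard⟩ := Nat.sSup_mem (s := {k | ∃ m, G.IsMatchingOn s m ∧ #(matchedVerts m) = k})
    ⟨0, id, isMatchingOn_id, by simp [matchedVerts]⟩ bddAbove_card_matchedVerts
  exact ⟨m, hm, hcard⟩

variable (G) in
lemma even_maxMatched (s : Finset V) : Even (G.maxMatched s) := by
  obtain ⟨m, hm, hcard⟩ := exists_isMaxMatchingOn G s
  rw [← hcard, card_matchedVerts_eq_two_mul hm.involutive]
  exact even_two_mul _

lemma maxMatched_mono (hst : s ⊆ t) : G.maxMatched s ≤ G.maxMatched t := by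
  obtain ⟨m, hm, hcard⟩ := exists_isMaxMatchingOn G s
  exact hcard ▸ (hm.mono hst).card_le_maxMatched

lemma maxMatched_add_le (hst : Disjoint s t) :
    G.maxMatched s + G.maxMatched t ≤ G.maxMatched (s ∪ t) := by
  obtain ⟨m₁, hm₁, hcard₁⟩ := exists_isMaxMatchingOn G s
  obtain ⟨m₂, hm₂, hcard₂⟩ := exists_isMaxMatchingOn G t
  have hm : G.IsMatchingOn (s ∪ t) (s.piecewise m₁ m₂) :=
    (hm₁.mono subset_union_left).piecewise (hm₂.mono subset_union_right)
      (fun v => hm₁.apply_mem) fun v hv => by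
        rwa [hm₂.apply_eq_of_notMem (Finset.disjoint_left.1 hst hv)]
  have h₁ : matchedVerts m₁ ∩ s = matchedVerts m₁ := inter_eq_left.2 hm₁.matchedVerts_subset
  have h₂ : matchedVerts m₂ \ s = matchedVerts m₂ :=
    sdiff_eq_self_of_disjoint (hst.symm.mono_left hm₂.matchedVerts_subset)
  rw [← hcard₁, ← hcard₂, ← h₁, ← h₂, ← card_matchedVerts_piecewise]
  exact hm.card_le_maxMatched

/-- A maximum matching `m` admits no augmenting path: here `P` would be one if `n` moved all of
it. -/
lemma IsMaxMatchingOn.exists_apply_eq_self (hm : G.IsMaxMatchingOn s m) (hn : G.IsMatchingOn s n)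
    (hmP : ∀ v ∈ P, m v ∈ P) (hnP : ∀ v ∈ P, n v ∈ P) (hu : u ∈ P) (hum : m u = u) :
    ∃ v ∈ P, n v = v := by
  by_contra! h
  have hPn : matchedVerts n ∩ P = P := inter_eq_right.2 fun v hv => mem_matchedVerts.2 (h v hv)
  have hPm : matchedVerts m ∩ P ⊂ P := ssubset_of_subset_of_ne inter_subset_right fun hP =>
    mem_matchedVerts.1 (mem_of_mem_inter_left (by rwa [hP] : u ∈ matchedVerts m ∩ P)) hum
  have := (hn.piecewise hm.1 hnP hmP).card_le_maxMatched
  rw [card_matchedVerts_piecewise, hPn, ← hm.2,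
    ← card_inter_add_card_sdiff (matchedVerts m) P] at this
  have := card_lt_card hPm
  omega

lemma IsMaxMatchingOn.not_adj (hm : G.IsMaxMatchingOn s m) (hu : m u = u) (hw : m w = w)
    (hus : u ∈ s) (hws : w ∈ s) : ¬G.Adj u w := by
  intro hadj
  obtain ⟨v, hv, hvv⟩ := hm.exists_apply_eq_self (P := {u, w}) (isMatchingOn_swap hadj hus hws)
    (by simp [hu, hw]) (by simp) (mem_insert_self u {w}) hu
  rcases mem_insert.1 hv with rfl | hv
  · simp [hadj.ne.symm] at hvv
  · rw [mem_singleton.1 hv] at hvv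
    simp [hadj.ne] at hvv

end Matching

section AlternatingPath

variable {m n : V → V} {u : V}

def altSeq (m n : V → V) (u : V) : ℕ → V
  | 0 => u
  | i + 1 => if Even i then n (altSeq m n u i) else m (altSeq m n u i)

lemma apply_altSeq_left (hm : Involutive m) (hum : m u = u) (i : ℕ) :
    m (altSeq m n u i) = altSeq m n u (if Even i then i - 1 else i + 1) := by
  rcases i with _ | i
  · exact hum
  by_cases hi : Even i <;> simp [altSeq, hi, Nat.even_add_one, hm _]

lemma apply_altSeq_right (hn : Involutive n) (i : ℕ) :
    n (altSeq m n u i) = altSeq m n u (if Even i then i + 1 else i - 1) := by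
  rcases i with _ | i
  · simp [altSeq]
  by_cases hi : Even i <;> simp [altSeq, hi, Nat.even_add_one, hn _]

lemma altSeq_injOn (hm : Involutive m) (hn : Involutive n) (hum : m u = u) {J : ℕ}
    (hstep : ∀ i < J, altSeq m n u (i + 1) ≠ altSeq m n u i) :
    ∀ b ≤ J, ∀ a < b, altSeq m n u a ≠ altSeq m n u b := by
  intro b
  induction b using Nat.strong_induction_on with
  | _ b ih =>
  intro hbJ a hab heq
  have hm' := congrArg m heq
  have hn' := congrArg n heq
  rw [apply_altSeq_left hm hum, apply_altSeq_left hm hum] at hm'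
  rw [apply_altSeq_right hn, apply_altSeq_right hn] at hn'
  -- Applying `m` or `n` moves both indices by one, towards a smaller counterexample.
  by_cases ha : Even a <;> by_cases hb : Even b <;>
    simp only [ha, hb, if_true, if_false] at hm' hn' <;> rw [Nat.even_iff] at ha hb
  · exact ih (b - 1) (by omega) (by omega) (a - 1) (by omega) hm'
  · rcases eq_or_ne (a + 1) b with rfl | hb'
    · exact hstep a (by omega) heq.symm
    · exact ih (b - 1) (by omega) (by omega) (a + 1) (by omega) hn'
  · rcases eq_or_ne (a + 1) b with rfl | hb'
    · exact hstep a (by omega) heq.symm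
    · exact ih (b - 1) (by omega) (by omega) (a + 1) (by omega) hm'
  · exact ih (b - 1) (by omega) (by omega) (a - 1) (by omega) hn'

lemma exists_altSeq_succ_eq [Finite V] (hm : Involutive m) (hn : Involutive n) (hum : m u = u) :
    ∃ i, altSeq m n u (i + 1) = altSeq m n u i := by
  by_contra! h
  obtain ⟨a, b, hab, heq⟩ := Finite.exists_ne_map_eq_of_infinite (altSeq m n u)
  rcases hab.lt_or_gt with hab | hab
  · exact altSeq_injOn hm hn hum (fun i _ => h i) b le_rfl a hab heq
  · exact altSeq_injOn hm hn hum (fun i _ => h i) a le_rfl b hab heq.symm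

lemma altSeq_eq_altSeq_iff (hm : Involutive m) (hn : Involutive n) (hum : m u = u) {J : ℕ}
    (hJ : altSeq m n u (J + 1) = altSeq m n u J)
    (hJmin : ∀ i < J, altSeq m n u (i + 1) ≠ altSeq m n u i) {i j : ℕ} (hi : i ≤ J)
    (hj : j ≤ J + 1) : altSeq m n u j = altSeq m n u i ↔ j = i ∨ (i = J ∧ j = J + 1) := by
  have hinj := altSeq_injOn hm hn hum hJmin
  constructor
  · intro h
    by_contra! hne
    rcases lt_trichotomy i j with hij | rfl | hij
    · rcases (show j ≤ J ∨ j = J + 1 by omega) with hjJ | rfl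
      · exact hinj j hjJ i hij h.symm
      · exact hinj J le_rfl i (by omega) (h.symm.trans hJ)
    · exact hne.1 rfl
    · exact hinj i hi j hij h
  · rintro (rfl | ⟨rfl, rfl⟩)
    · rfl
    · exact hJ

variable [Fintype V] [DecidableEq V] {G : SimpleGraph V} {s : Finset V}

/-- If the maximum matching `m` misses `u`, the component `P` of `u` in `m ∪ n` is a path
alternating between `n` and `m`; it starts at `u`, and ends at a vertex `z` missed by `n`, since
a path of odd length would augment `m`. -/
lemma exists_alternating_path (hm : G.IsMaxMatchingOn s m) (hn : G.IsMatchingOn s n)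
    (hum : m u = u) :
    ∃ (P : Finset V) (z : V), u ∈ P ∧ z ∈ P ∧ (∀ v ∈ P, m v ∈ P) ∧ (∀ v ∈ P, n v ∈ P) ∧
      (∀ v ∈ P, m v = v ↔ v = u) ∧ (∀ v ∈ P, n v = v ↔ v = z) := by
  set x := altSeq m n u
  have hstop := exists_altSeq_succ_eq hm.1.involutive hn.involutive hum
  obtain ⟨J, hJ, hJmin⟩ : ∃ J, x (J + 1) = x J ∧ ∀ i < J, x (i + 1) ≠ x i :=
    ⟨Nat.find hstop, Nat.find_spec hstop, fun i hi => Nat.find_min hstop hi⟩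
  have hxeq {i j : ℕ} (hi : i ≤ J) (hj : j ≤ J + 1) :=
    altSeq_eq_altSeq_iff hm.1.involutive hn.involutive hum hJ hJmin hi hj
  set P := (range (J + 1)).image x
  have hxP : ∀ i ≤ J + 1, x i ∈ P := fun i hi => by
    rcases (show i ≤ J ∨ i = J + 1 by omega) with hiJ | rfl
    · exact mem_image_of_mem x (mem_range.2 (by omega))
    · exact hJ ▸ mem_image_of_mem x (mem_range.2 (by omega))
  have hPx : ∀ v ∈ P, ∃ i ≤ J, x i = v := fun v hv => by
    obtain ⟨i, hi, rfl⟩ := mem_image.1 hv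
    exact ⟨i, by rw [mem_range] at hi; omega, rfl⟩
  have hmx := apply_altSeq_left (n := n) hm.1.involutive hum
  have hnx := apply_altSeq_right (m := m) (u := u) hn.involutive
  have hmP : ∀ v ∈ P, m v ∈ P := fun v hv => by
    obtain ⟨i, hi, rfl⟩ := hPx v hv
    exact hmx i ▸ hxP _ (by split_ifs <;> omega)
  have hnP : ∀ v ∈ P, n v ∈ P := fun v hv => by
    obtain ⟨i, hi, rfl⟩ := hPx v hv
    exact hnx i ▸ hxP _ (by split_ifs <;> omega)
  have hnfix : ∀ i ≤ J, n (x i) = x i ↔ i = J ∧ Even J := fun i hi => by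
    rw [hnx, hxeq hi (by split_ifs <;> omega)]
    by_cases he : Even i <;> simp only [he, if_true, if_false] <;> rw [Nat.even_iff] at * <;> omega
  have hJeven : Even J := by
    obtain ⟨v, hv, hnv⟩ := hm.exists_apply_eq_self hn hmP hnP (hxP 0 (by omega)) hum
    obtain ⟨i, hi, rfl⟩ := hPx v hv
    exact ((hnfix i hi).1 hnv).2
  refine ⟨P, x J, hxP 0 (by omega), hxP J (by omega), hmP, hnP, fun v hv => ?_, fun v hv => ?_⟩
  · obtain ⟨i, hi, rfl⟩ := hPx v hv
    change _ ↔ x i = x 0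
    rw [hmx, hxeq hi (by split_ifs <;> omega), hxeq (Nat.zero_le J) (by omega)]
    by_cases he : Even i <;> simp only [he, if_true, if_false] <;> rw [Nat.even_iff] at * <;> omega
  · obtain ⟨i, hi, rfl⟩ := hPx v hv
    rw [hnfix i hi, hxeq le_rfl (by omega)]
    simp only [hJeven, and_true]
    omega

end AlternatingPath

section Gallai

lemma Reachable.exists_adj_dist_lt {H : SimpleGraph V} {u w : V} (h : H.Reachable u w)
    (huw : u ≠ w) : ∃ t, H.Adj u t ∧ H.dist t w < H.dist u w := by
  obtain ⟨p, hp⟩ := h.exists_walk_length_eq_dist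
  cases p with
  | nil => exact absurd rfl huw
  | cons hadj q =>
    rw [Walk.length_cons] at hp
    exact ⟨_, hadj, (dist_le q).trans_lt (by omega)⟩

variable [Fintype V] [DecidableEq V] {G : SimpleGraph V} {s P : Finset V} {m n : V → V}
  {u w : V}

lemma matchedVerts_inter_eq_erase (hfix : ∀ v ∈ P, m v = v ↔ v = u) :
    matchedVerts m ∩ P = P.erase u := by
  ext v
  by_cases hv : v ∈ P <;> simp [hv, hfix]

lemma IsMaxMatchingOn.piecewise (hm : G.IsMaxMatchingOn s m) (hn : G.IsMatchingOn s n)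
    (hmP : ∀ v ∈ P, m v ∈ P) (hnP : ∀ v ∈ P, n v ∈ P) (hmfix : ∀ v ∈ P, m v = v ↔ v = u)
    (hnfix : ∀ v ∈ P, n v = v ↔ v = w) (hu : u ∈ P) (hw : w ∈ P) :
    G.IsMaxMatchingOn s (P.piecewise n m) := by
  refine ⟨hn.piecewise hm.1 hnP hmP, ?_⟩
  rw [card_matchedVerts_piecewise, ← hm.2, ← card_inter_add_card_sdiff (matchedVerts m) P,
    matchedVerts_inter_eq_erase hmfix, matchedVerts_inter_eq_erase hnfix,
    card_erase_of_mem hu, card_erase_of_mem hw]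

lemma card_agree_lt_piecewise (hu : u ∈ P) (hnu : n u ≠ m u) :
    #{v | n v = m v} < #{v | P.piecewise m n v = m v} := by
  refine card_lt_card ⟨fun v hv => ?_, fun h => ?_⟩
  · by_cases hvP : v ∈ P <;> simp_all [Finset.piecewise]
  · have := @h u (by simp [Finset.piecewise, hu])
    simp [hnu] at this

/-- The descent step of Gallai's lemma: a maximum matching missing two vertices of `s` can be
traded for one missing two vertices of `s` at smaller distance in `G[s]`. -/
lemma exists_exposed_pair_dist_lt (hconn : ∀ u ∈ s, ∀ w ∈ s, (G.restrictTo s).Reachable u w)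
    (havoid : ∀ v ∈ s, ∃ n, G.IsMaxMatchingOn s n ∧ n v = v) (hm : G.IsMaxMatchingOn s m)
    (hu : m u = u) (hw : m w = w) (hus : u ∈ s) (hws : w ∈ s) (huw : u ≠ w) :
    ∃ m' u' w', G.IsMaxMatchingOn s m' ∧ m' u' = u' ∧ m' w' = w' ∧ u' ∈ s ∧ w' ∈ s ∧ u' ≠ w' ∧
      (G.restrictTo s).dist u' w' < (G.restrictTo s).dist u w := by
  set H := G.restrictTo s
  have hdist : 1 < H.dist u w :=
    (hconn u hus w hws).one_lt_dist_of_ne_of_not_adj huw fun h => hm.not_adj hu hw hus hws h.1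
  obtain ⟨t, ⟨hut, -, hts⟩, htw⟩ := (hconn u hus w hws).exists_adj_dist_lt huw
  have hdut : H.dist u t < H.dist u w :=
    (dist_eq_one_iff_adj.2 (show H.Adj u t from ⟨hut, hus, hts⟩)).trans_lt hdist
  by_cases hmt : m t = t
  · exact ⟨m, u, t, hm, hu, hmt, hus, hts, hut.ne, hdut⟩
  -- Among the maximum matchings missing `t`, take one agreeing with `m` as often as possible.
  classical
  obtain ⟨n, hnC, hnmax⟩ := exists_max_image {n | G.IsMaxMatchingOn s n ∧ n t = t}
    (fun n => #{v | n v = m v}) (by obtain ⟨n, hn⟩ := havoid t hts; exact ⟨n, by simpa using hn⟩)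
  obtain ⟨hn, hnt⟩ := mem_filter.1 hnC |>.2
  by_cases hnu : n u = u
  · exact ⟨n, t, u, hn, hnt, hnu, hts, hus, hut.ne', by rwa [dist_comm]⟩
  by_cases hnw : n w = w
  · exact ⟨n, t, w, hn, hnt, hnw, hts, hws, fun h => hmt (h ▸ hw), htw⟩
  obtain ⟨P, z, huP, hzP, hmP, hnP, hmfix, hnfix⟩ := exists_alternating_path hm hn.1 hu
  have hwP : w ∉ P := fun h => huw ((hmfix w h).1 hw).symm
  -- Exchange `m` and `n` along `P`: if `P` ends at `t`, `m` turns into a maximum matching missing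
  -- `t` and `w`; otherwise `n` turns into one missing `t` and agreeing more often with `m`.
  by_cases hzt : z = t
  · subst hzt
    refine ⟨P.piecewise n m, z, w, hm.piecewise hn.1 hmP hnP hmfix hnfix huP hzP, ?_, ?_, hts,
      hws, fun h => hmt (h ▸ hw), htw⟩
    · simpa [Finset.piecewise, hzP] using hnt
    · simpa [Finset.piecewise, hwP] using hw
  · have htP : t ∉ P := fun h => hzt ((hnfix t h).1 hnt).symm
    have hn' : P.piecewise m n ∈ ({n | G.IsMaxMatchingOn s n ∧ n t = t} : Finset _) := by
      simpa [Finset.piecewise, htP, hnt] using hn.piecewise hm.1 hnP hmP hnfix hmfix hzP huP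
    exact absurd (hnmax _ hn') (card_agree_lt_piecewise huP (by rwa [hu])).not_ge

/-- Gallai's lemma: if `G[s]` is connected and each of its vertices is missed by some maximum
matching, then every maximum matching misses at most one vertex of `s`. -/
lemma card_filter_apply_eq_self_le_one
    (hconn : ∀ u ∈ s, ∀ w ∈ s, (G.restrictTo s).Reachable u w)
    (havoid : ∀ v ∈ s, ∃ n, G.IsMaxMatchingOn s n ∧ n v = v) (hm : G.IsMaxMatchingOn s m) :
    #{v ∈ s | m v = v} ≤ 1 := by
  suffices ∀ d m u w, G.IsMaxMatchingOn s m → m u = u → m w = w → u ∈ s → w ∈ s → u ≠ w →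
      (G.restrictTo s).dist u w ≠ d by
    by_contra! h
    obtain ⟨u, hu, w, hw, huw⟩ := one_lt_card.1 h
    rw [mem_filter] at hu hw
    exact this _ m u w hm hu.2 hw.2 hu.1 hw.1 huw rfl
  intro d
  induction d using Nat.strong_induction_on with
  | _ d ih =>
    rintro m u w hm hu hw hus hws huw rfl
    obtain ⟨m', u', w', hm', hu', hw', hus', hws', huw', hlt⟩ :=
      exists_exposed_pair_dist_lt hconn havoid hm hu hw hus hws huw
    exact ih _ hlt m' u' w' hm' hu' hw' hus' hws' huw' rfl

lemma card_le_maxMatched_add_one (hconn : ∀ u ∈ s, ∀ w ∈ s, (G.restrictTo s).Reachable u w)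
    (havoid : ∀ v ∈ s, ∃ n, G.IsMaxMatchingOn s n ∧ n v = v) : #s ≤ G.maxMatched s + 1 := by
  obtain ⟨m, hm⟩ := exists_isMaxMatchingOn G s
  have hsplit := card_filter_add_card_filter_not (s := s) (fun v => m v = v)
  have hmatched : {v ∈ s | ¬m v = v} = matchedVerts m := by
    ext v
    simp only [mem_filter, mem_matchedVerts]
    exact ⟨fun h => h.2, fun h => ⟨hm.1.mem v h, h⟩⟩
  have := card_filter_apply_eq_self_le_one hconn havoid hm
  rw [hmatched, hm.2] at hsplit
  omega

end Gallai

section EdgeBound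

variable [Fintype V] [DecidableEq V] {G : SimpleGraph V} {s : Finset V}

lemma restrictTo_reachable (hs : ∀ t ⊂ s, t.Nonempty → ∃ u ∈ t, ∃ v ∈ s \ t, G.Adj u v)
    {u w : V} (hu : u ∈ s) (hw : w ∈ s) : (G.restrictTo s).Reachable u w := by
  classical
  set t := {v ∈ s | (G.restrictTo s).Reachable u v}
  by_contra huw
  have hts : t ⊂ s := Finset.ssubset_iff_subset_ne.2 ⟨filter_subset _ _, fun h =>
    huw (mem_filter.1 (h ▸ hw : w ∈ t)).2⟩
  obtain ⟨x, hx, y, hy, hxy⟩ := hs t hts ⟨u, mem_filter.2 ⟨hu, Reachable.refl u⟩⟩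
  obtain ⟨hxs, hux⟩ := mem_filter.1 hx
  obtain ⟨hys, hyt⟩ := mem_sdiff.1 hy
  exact hyt (mem_filter.2 ⟨hys, hux.trans (Adj.reachable ⟨hxy, hxs, hys⟩)⟩)

lemma exists_isMaxMatchingOn_apply_eq_self {v : V}
    (hv : G.maxMatched s < G.maxMatched (s.erase v) + 2) :
    ∃ n, G.IsMaxMatchingOn s n ∧ n v = v := by
  obtain ⟨n, hn, hcard⟩ := exists_isMaxMatchingOn G (s.erase v)
  have hle : G.maxMatched (s.erase v) ≤ G.maxMatched s := maxMatched_mono (erase_subset v s)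
  have heq : G.maxMatched (s.erase v) = G.maxMatched s := by
    obtain ⟨a, ha⟩ := G.even_maxMatched s
    obtain ⟨b, hb⟩ := G.even_maxMatched (s.erase v)
    omega
  exact ⟨n, ⟨hn.mono (erase_subset v s), hcard.trans heq⟩,
    hn.apply_eq_of_notMem (notMem_erase v s)⟩

variable [DecidableRel G.Adj]

lemma edgesIn_le_chvatalHansonBound {Δ : ℕ} (hdeg : ∀ v, G.degree v ≤ Δ) (s : Finset V) :
    G.edgesIn s ≤ chvatalHansonBound Δ (G.maxMatched s / 2) := by
  induction s using Finset.strongInduction with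
  | H s ih =>
  by_cases hsplit : ∃ t ⊂ s, t.Nonempty ∧ ∀ u ∈ t, ∀ v ∈ s \ t, ¬G.Adj u v
  · obtain ⟨t, hts, ht, hcross⟩ := hsplit
    have hmatch := maxMatched_add_le (G := G) (disjoint_sdiff (s := t) (t := s))
    rw [union_sdiff_of_subset hts.subset] at hmatch
    calc G.edgesIn s ≤ G.edgesIn t + G.edgesIn (s \ t) := edgesIn_le_add_of_forall_not_adj hcross
      _ ≤ chvatalHansonBound Δ (G.maxMatched t / 2) +
            chvatalHansonBound Δ (G.maxMatched (s \ t) / 2) :=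
          add_le_add (ih t hts) (ih _ (sdiff_ssubset hts.subset ht))
      _ ≤ chvatalHansonBound Δ (G.maxMatched s / 2) :=
          (chvatalHansonBound.add_le _ _).trans (chvatalHansonBound.mono (by omega))
  by_cases hdrop : ∃ v ∈ s, G.maxMatched (s.erase v) + 2 ≤ G.maxMatched s
  · obtain ⟨v, hv, hlt⟩ := hdrop
    calc G.edgesIn s ≤ G.edgesIn (s.erase v) + Δ := edgesIn_le_edgesIn_erase_add hdeg s v
      _ ≤ chvatalHansonBound Δ (G.maxMatched (s.erase v) / 2) + Δ :=
          Nat.add_le_add_right (ih _ (erase_ssubset hv)) _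
      _ ≤ chvatalHansonBound Δ (G.maxMatched s / 2) :=
          (chvatalHansonBound.add_le_succ _).trans (chvatalHansonBound.mono (by omega))
  -- Otherwise `G[s]` is connected and Gallai's lemma applies.
  push Not at hsplit hdrop
  have hcard := card_le_maxMatched_add_one
    (fun u hu w hw => restrictTo_reachable (fun t hts ht => by simpa using hsplit t hts ht) hu hw)
    fun v hv => exists_isMaxMatchingOn_apply_eq_self (hdrop v hv)
  obtain ⟨a, ha⟩ := G.even_maxMatched s
  exact chvatalHansonBound.le_of_card_le (by omega) (two_mul_edgesIn_le_card_mul hdeg s)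
    (two_mul_edgesIn_le_card_mul_pred s)

end EdgeBound

section Subgraph

variable [Fintype V] [DecidableEq V] {G : SimpleGraph V} {s : Finset V} {m : V → V}

def IsMatchingOn.toSubgraph (hm : G.IsMatchingOn s m) : G.Subgraph where
  verts := matchedVerts m
  Adj u v := G.Adj u v ∧ m u = v
  adj_sub h := h.1
  edge_vert {u v} h := by simpa [h.2] using h.1.ne'
  symm := ⟨fun u v h => ⟨h.1.symm, h.2 ▸ hm.involutive u⟩⟩

lemma IsMatchingOn.isMatching_toSubgraph (hm : G.IsMatchingOn s m) : hm.toSubgraph.IsMatching :=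
  fun v hv => ⟨m v, ⟨hm.adj v (by simpa [toSubgraph] using hv), rfl⟩, fun _ h => h.2.symm⟩

lemma IsMatchingOn.edgeSet_toSubgraph (hm : G.IsMatchingOn s m) :
    hm.toSubgraph.edgeSet = (matchedVerts m).image fun v => s(v, m v) := by
  ext e
  induction e using Sym2.ind with
  | h a b =>
    simp only [Subgraph.mem_edgeSet, toSubgraph, coe_image, Set.mem_image, mem_coe,
      mem_matchedVerts, Sym2.eq_iff]
    constructor
    · rintro ⟨hab, rfl⟩
      exact ⟨a, hab.ne', Or.inl ⟨rfl, rfl⟩⟩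
    · rintro ⟨v, hv, ⟨rfl, rfl⟩ | ⟨rfl, rfl⟩⟩
      · exact ⟨hm.adj v hv, rfl⟩
      · exact ⟨(hm.adj v hv).symm, hm.involutive v⟩

lemma maxMatched_le_two_mul {ν : ℕ} (hν : ∀ M : G.Subgraph, M.IsMatching → M.edgeSet.ncard ≤ ν) :
    G.maxMatched s ≤ 2 * ν := by
  obtain ⟨m, hm, hcard⟩ := exists_isMaxMatchingOn G s
  have := hν _ hm.isMatching_toSubgraph
  rw [hm.edgeSet_toSubgraph, Set.ncard_coe_finset] at this
  rw [← hcard, card_matchedVerts_eq_two_mul hm.involutive]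
  omega

end Subgraph

end SimpleGraph

open SimpleGraph

theorem chvatal_hanson_general {V : Type*} [Fintype V] [DecidableEq V]
    (G : SimpleGraph V) [DecidableRel G.Adj] (ν Δ : ℕ)
    (hmatch : ∀ M : G.Subgraph, M.IsMatching → M.edgeSet.ncard ≤ ν)
    (hdeg : ∀ v : V, G.degree v ≤ Δ) :
    G.edgeFinset.card ≤ ν * Δ + (Δ / 2) * (ν / ((Δ + 1) / 2)) ∧
      G.edgeFinset.card ≤ ν * (Δ + 1) := by
  have hbound : #G.edgeFinset ≤ chvatalHansonBound Δ ν := by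
    rw [← edgesIn_univ]
    exact (edgesIn_le_chvatalHansonBound hdeg univ).trans
      (chvatalHansonBound.mono (by have := maxMatched_le_two_mul (s := univ) hmatch; omega))
  exact ⟨hbound, hbound.trans (chvatalHansonBound.le_mul_succ ν)⟩

/-- Chvátal–Hanson theorem: if every matching of `G` has at most `ν` edges and every
vertex has degree at most `Δ`, then `e(G) ≤ νΔ + ⌊Δ/2⌋⌊ν/⌈Δ/2⌉⌋ ≤ ν(Δ+1)`. -/
theorem chvatal_hanson {V : Type*} [Fintype V] [DecidableEq V]
    (G : SimpleGraph V) [DecidableRel G.Adj] (ν Δ : ℕ) (hν : 1 ≤ ν) (hΔ : 1 ≤ Δ)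
    (hmatch : ∀ M : G.Subgraph, M.IsMatching → M.edgeSet.ncard ≤ ν)
    (hdeg : ∀ v : V, G.degree v ≤ Δ) :
    G.edgeFinset.card ≤ ν * Δ + (Δ / 2) * (ν / ((Δ + 1) / 2)) ∧
      G.edgeFinset.card ≤ ν * (Δ + 1) :=
  chvatal_hanson_general G ν Δ hmatch hdeg
end

section
/- For any simple graph G with m edges, the sum over all vertices v of d(v)² is at most m² + m. -/
open SimpleGraph Finset

lemma degree_add_degree_le {V : Type*} [Fintype V] [DecidableEq V]
    (G : SimpleGraph V) [DecidableRel G.Adj] {u v : V} (h : G.Adj u v) :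
    G.degree u + G.degree v ≤ G.edgeFinset.card + 1 := by
  rw [← card_incidenceFinset_eq_degree, ← card_incidenceFinset_eq_degree,
    ← Finset.card_union_add_card_inter]
  have h1 : G.incidenceFinset u ∪ G.incidenceFinset v ⊆ G.edgeFinset := by
    intro e he
    rw [Finset.mem_union] at he
    rcases he with he | he <;>
      · rw [mem_incidenceFinset] at he
        exact mem_edgeFinset.2 he.1
  have h2 : G.incidenceFinset u ∩ G.incidenceFinset v = {s(u, v)} := by
    rw [incidenceFinset, incidenceFinset, ← Set.toFinset_inter,
      Set.toFinset_congr (G.incidenceSet_inter_incidenceSet_of_adj h),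
      Set.toFinset_singleton]
  rw [h2]
  simpa using Finset.card_le_card h1

/-- For any simple graph `G` with `m` edges, `∑_v d(v)² ≤ m² + m`. -/
theorem sum_degree_sq_le {V : Type*} [Fintype V] [DecidableEq V]
    (G : SimpleGraph V) [DecidableRel G.Adj] (m : ℕ) (hm : G.edgeFinset.card = m) :
    ∑ v : V, (G.degree v) ^ 2 ≤ m ^ 2 + m := by
  have hA : ∑ v : V, (G.degree v) ^ 2
      = ∑ v : V, ∑ u ∈ G.neighborFinset v, G.degree v := by
    simp [sq, card_neighborFinset_eq_degree, mul_comm]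
  have hswap : ∑ v : V, ∑ u ∈ G.neighborFinset v, G.degree v
      = ∑ v : V, ∑ u ∈ G.neighborFinset v, G.degree u := by
    have e1 : ∀ (f : V → V → ℕ), ∑ v : V, ∑ u ∈ G.neighborFinset v, f v u
        = ∑ v : V, ∑ u : V, if G.Adj v u then f v u else 0 := by
      intro f
      refine Finset.sum_congr rfl fun v _ => ?_
      rw [neighborFinset_eq_filter, Finset.sum_filter]
    rw [e1, e1, Finset.sum_comm]
    refine Finset.sum_congr rfl fun v _ => Finset.sum_congr rfl fun u _ => ?_
    by_cases hadj : G.Adj u v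
    · simp [hadj, hadj.symm]
    · have h2 : ¬ G.Adj v u := fun hh => hadj hh.symm
      simp [hadj, h2]
  have h2 : ∑ v : V, ∑ u ∈ G.neighborFinset v, (G.degree v + G.degree u)
      = 2 * ∑ v : V, (G.degree v) ^ 2 := by
    simp only [Finset.sum_add_distrib]
    rw [← hswap, ← hA, two_mul]
  have h3 : ∑ v : V, ∑ u ∈ G.neighborFinset v, (G.degree v + G.degree u)
      ≤ ∑ v : V, ∑ u ∈ G.neighborFinset v, (m + 1) := by
    refine Finset.sum_le_sum fun v _ => Finset.sum_le_sum fun u hu => ?_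
    rw [mem_neighborFinset] at hu
    rw [← hm]
    exact degree_add_degree_le G hu
  have h4 : ∑ v : V, ∑ u ∈ G.neighborFinset v, (m + 1) = 2 * m * (m + 1) := by
    simp only [Finset.sum_const, card_neighborFinset_eq_degree, smul_eq_mul]
    rw [← Finset.sum_mul, G.sum_degrees_eq_twice_card_edges, hm]
  have h5 : 2 * ∑ v : V, (G.degree v) ^ 2 ≤ 2 * (m ^ 2 + m) := by
    rw [← h2]
    calc _ ≤ _ := h3
      _ = 2 * m * (m + 1) := h4
      _ = 2 * (m ^ 2 + m) := by ring
  omega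
end

section
/- Let r ≥ 2 and let y be the positive unit Perron eigenvector of T_{n,r} (n sufficiently large). If V₁ is a part of size ⌊n/r⌋ with common entry value y₁ and V₂ is a part of size ⌈n/r⌉ with common entry value y₂, then (1 − 1/n)·y₁ ≤ y₂ ≤ y₁. -/
/-!
The Turán graph `T_{n,r}` is complete multipartite with the residue classes mod `r` as parts, so
the eigenvalue equation at a vertex `v` reads `ρ y_v + ∑_{w ∈ part(v)} y_w = ∑_w y_w`. On a part
of size `k` with constant entry `z` this is `(ρ + k) z = ∑ y`. Summing the equation over all `v`
gives `n ∑ y ≤ (ρ + max_i |V_i|) ∑ y`, i.e. `n ≤ ρ + ⌈n/r⌉`. With `a = ⌊n/r⌋ ≤ b = ⌈n/r⌉ ≤ a + 1`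
the identity `(ρ + a) y₁ = (ρ + b) y₂` gives `y₂ ≤ y₁`, and
`(1 - 1/n)(ρ + b) ≤ ρ + b - 1 ≤ ρ + a` gives `(1 - 1/n) y₁ ≤ y₂`.
-/

open SimpleGraph Finset Matrix

theorem sum_sum_fiber_eq_sum_card_smul {V ι M : Type*} [Fintype V] [DecidableEq ι]
    [AddCommMonoid M] (p : V → ι) (y : V → M) :
    ∑ v, ∑ w with p w = p v, y w = ∑ w, #{v | p v = p w} • y w := by
  rw [sum_comm' (t' := univ) (s' := fun w => {v | p v = p w}) (by simp [eq_comm])]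
  simp_rw [sum_const]

namespace SimpleGraph

variable {V ι : Type*} [Fintype V] [DecidableEq ι] {G : SimpleGraph V} [DecidableRel G.Adj]
  {p : V → ι}

theorem adjMatrix_mulVec_apply_of_adj_iff {R : Type*} [NonAssocRing R]
    (hG : ∀ v w, G.Adj v w ↔ p v ≠ p w) (y : V → R) (v : V) :
    (G.adjMatrix R *ᵥ y) v = ∑ w, y w - ∑ w with p w = p v, y w := by
  have hnbr : G.neighborFinset v = ({w | p w ≠ p v} : Finset V) := by
    ext w; simp [hG, eq_comm]
  rw [adjMatrix_mulVec_apply, hnbr, eq_sub_iff_add_eq, add_comm, sum_filter_add_sum_filter_not]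

theorem sum_eq_mul_add_sum_part_of_mulVec_eq_smul {R : Type*} [NonAssocRing R]
    (hG : ∀ v w, G.Adj v w ↔ p v ≠ p w) {ρ : R} {y : V → R} (hy : G.adjMatrix R *ᵥ y = ρ • y)
    (v : V) : ∑ w, y w = ρ * y v + ∑ w with p w = p v, y w := by
  rw [← sub_eq_iff_eq_add, ← adjMatrix_mulVec_apply_of_adj_iff hG, hy, Pi.smul_apply, smul_eq_mul]

theorem sum_eq_add_card_mul_of_mulVec_eq_smul {R : Type*} [NonAssocRing R]
    (hG : ∀ v w, G.Adj v w ↔ p v ≠ p w) {ρ : R} {y : V → R} (hy : G.adjMatrix R *ᵥ y = ρ • y)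
    {i : ι} {v : V} (hv : p v = i) {z : R} (hz : ∀ w, p w = i → y w = z) :
    ∑ w, y w = (ρ + #{w | p w = i}) * z := by
  rw [sum_eq_mul_add_sum_part_of_mulVec_eq_smul hG hy v, hv, hz v hv,
    sum_congr rfl fun w hw => hz w (mem_filter.1 hw).2, sum_const, nsmul_eq_mul, add_mul]

theorem card_le_add_of_mulVec_eq_smul {K : Type*} [Field K] [LinearOrder K]
    [IsStrictOrderedRing K] [Nonempty V] (hG : ∀ v w, G.Adj v w ↔ p v ≠ p w) {ρ : K}
    {y : V → K} (hy : G.adjMatrix K *ᵥ y = ρ • y) (hpos : ∀ v, 0 < y v) {b : K}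
    (hb : ∀ i, (#{v | p v = i} : K) ≤ b) : (Fintype.card V : K) ≤ ρ + b := by
  set S := ∑ v, y v
  have hS : 0 < S := sum_pos (fun v _ => hpos v) univ_nonempty
  have hparts : ∑ v, ∑ w with p w = p v, y w ≤ b * S := by
    rw [sum_sum_fiber_eq_sum_card_smul, mul_sum]
    exact sum_le_sum fun w _ => by
      rw [nsmul_eq_mul]; exact mul_le_mul_of_nonneg_right (hb (p w)) (hpos w).le
  refine le_of_mul_le_mul_right ?_ hS
  calc (Fintype.card V : K) * S = ∑ v, (ρ * y v + ∑ w with p w = p v, y w) := by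
        rw [← nsmul_eq_mul, ← card_univ, ← sum_const]
        exact sum_congr rfl fun v _ => sum_eq_mul_add_sum_part_of_mulVec_eq_smul hG hy v
    _ = ρ * S + ∑ v, ∑ w with p w = p v, y w := by rw [sum_add_distrib, mul_sum]
    _ ≤ (ρ + b) * S := by rw [add_mul]; exact add_le_add_right hparts _

end SimpleGraph

theorem Fin.card_filter_val_mod_eq_le {n r : ℕ} (hr : 0 < r) (j : ℕ) :
    #{v : Fin n | v.val % r = j} ≤ (n + r - 1) / r := by
  have hfin : #{v : Fin n | v.val % r = j} = #{k ∈ range n | k % r = j} := by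
    rw [← Nat.Iio_eq_range, ← Fin.map_valEmbedding_univ, filter_map, card_map]; rfl
  have hcount : #{k ∈ range n | k % r = j} ≤ n.count (· ≡ j [MOD r]) := by
    rw [Nat.count_eq_card_filter_range]
    exact card_le_card <| monotone_filter_right _ fun k _ hk => by
      rw [Nat.ModEq, ← hk, Nat.mod_mod]
  refine hfin.trans_le (hcount.trans ?_)
  rw [Nat.count_modEq_card n hr, Nat.le_div_iff_mul_le hr, add_mul]
  have := Nat.div_add_mod n r
  split_ifs <;> rw [mul_comm] <;> omega

theorem le_and_le_of_add_mul_eq_add_mul {K : Type*} [Field K] [LinearOrder K]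
    [IsStrictOrderedRing K] {n ρ a b y₁ y₂ : K} (hab : a ≤ b) (hba : b ≤ a + 1) (hn : 0 < n)
    (hρ : n ≤ ρ + b) (h : (ρ + a) * y₁ = (ρ + b) * y₂) (hy₁ : 0 < y₁) (hy₂ : 0 < y₂) :
    (1 - 1 / n) * y₁ ≤ y₂ ∧ y₂ ≤ y₁ := by
  have hb : 0 < ρ + b := hn.trans_le hρ
  have ha : 0 < ρ + a := pos_of_mul_pos_left (h ▸ mul_pos hb hy₂) hy₁.le
  constructor
  · have hcoef : (1 - 1 / n) * (ρ + b) ≤ ρ + a := by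
      have : 1 ≤ (ρ + b) / n := (one_le_div hn).2 hρ
      calc (1 - 1 / n) * (ρ + b) = ρ + b - (ρ + b) / n := by ring
        _ ≤ ρ + a := by linarith
    refine le_of_mul_le_mul_left ?_ hb
    calc (ρ + b) * ((1 - 1 / n) * y₁) = (1 - 1 / n) * (ρ + b) * y₁ := by ring
      _ ≤ (ρ + a) * y₁ := mul_le_mul_of_nonneg_right hcoef hy₁.le
      _ = (ρ + b) * y₂ := h
  · refine le_of_mul_le_mul_left ?_ ha
    calc (ρ + a) * y₂ ≤ (ρ + b) * y₂ := mul_le_mul_of_nonneg_right (by linarith) hy₂.le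
      _ = (ρ + a) * y₁ := h.symm

theorem turan_perron_entries_general (r : ℕ) :
    ∃ N : ℕ, ∀ n ≥ N, ∀ (ρ : ℝ) (y : Fin n → ℝ),
      (∀ v, 0 < y v) → (∑ v : Fin n, y v ^ 2 = 1) →
      ((turanGraph n r).adjMatrix ℝ).mulVec y = ρ • y →
      ∀ c₁ c₂ : ℕ, c₁ < r → c₂ < r →
      (univ.filter (fun v : Fin n => v.val % r = c₁)).card = n / r →
      (univ.filter (fun v : Fin n => v.val % r = c₂)).card = (n + r - 1) / r →
      ∀ y₁ y₂ : ℝ,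
      (∀ v : Fin n, v.val % r = c₁ → y v = y₁) →
      (∀ v : Fin n, v.val % r = c₂ → y v = y₂) →
      (1 - 1 / (n : ℝ)) * y₁ ≤ y₂ ∧ y₂ ≤ y₁ := by
  refine ⟨r, fun n hn ρ y hy _ hmul c₁ c₂ hc₁ _ hcard₁ hcard₂ y₁ y₂ hy₁ hy₂ => ?_⟩
  have hr : 0 < r := c₁.zero_le.trans_lt hc₁
  have hG (v w : Fin n) : (turanGraph n r).Adj v w ↔ v.val % r ≠ w.val % r := turanGraph_adj
  have hfloor : n / r ≤ (n + r - 1) / r := Nat.div_le_div_right (by omega)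
  have hceil : (n + r - 1) / r ≤ n / r + 1 :=
    (Nat.div_le_div_right (Nat.sub_le _ 1)).trans (Nat.add_div_right n hr).le
  obtain ⟨v₁, -, hv₁⟩ := filter_nonempty_iff.1 (card_pos.1 (hcard₁ ▸ Nat.div_pos hn hr))
  obtain ⟨v₂, -, hv₂⟩ :=
    filter_nonempty_iff.1 (card_pos.1 (hcard₂ ▸ (Nat.div_pos hn hr).trans_le hfloor))
  have E₁ := sum_eq_add_card_mul_of_mulVec_eq_smul hG hmul hv₁ hy₁
  have E₂ := sum_eq_add_card_mul_of_mulVec_eq_smul hG hmul hv₂ hy₂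
  rw [hcard₁] at E₁
  rw [hcard₂] at E₂
  have : Nonempty (Fin n) := ⟨v₁⟩
  have hρ := card_le_add_of_mulVec_eq_smul hG hmul hy (b := ((n + r - 1) / r : ℕ))
    fun j => Nat.cast_le.2 (Fin.card_filter_val_mod_eq_le hr j)
  rw [Fintype.card_fin] at hρ
  exact le_and_le_of_add_mul_eq_add_mul (Nat.cast_le.2 hfloor) (by exact_mod_cast hceil)
    (Nat.cast_pos.2 (hr.trans_le hn)) hρ (E₁.symm.trans E₂)
    (hy₁ v₁ hv₁ ▸ hy v₁) (hy₂ v₂ hv₂ ▸ hy v₂)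

/-- Entries of the Perron vector of the Turán graph: if `y₁` is the common value on a
part of size `⌊n/r⌋` and `y₂` the common value on a part of size `⌈n/r⌉`, then
`(1 - 1/n)·y₁ ≤ y₂ ≤ y₁`. -/
theorem turan_perron_entries (r : ℕ) (hr : 2 ≤ r) :
    ∃ N : ℕ, ∀ n ≥ N, ∀ (ρ : ℝ) (y : Fin n → ℝ),
      (∀ v, 0 < y v) → (∑ v : Fin n, y v ^ 2 = 1) →
      ((turanGraph n r).adjMatrix ℝ).mulVec y = ρ • y →
      ∀ c₁ c₂ : ℕ, c₁ < r → c₂ < r →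
      (univ.filter (fun v : Fin n => v.val % r = c₁)).card = n / r →
      (univ.filter (fun v : Fin n => v.val % r = c₂)).card = (n + r - 1) / r →
      ∀ y₁ y₂ : ℝ,
      (∀ v : Fin n, v.val % r = c₁ → y v = y₁) →
      (∀ v : Fin n, v.val % r = c₂ → y v = y₂) →
      (1 - 1 / (n : ℝ)) * y₁ ≤ y₂ ∧ y₂ ≤ y₁ :=
  turan_perron_entries_general r
end

section
/- Let G and G' be graphs on the same vertex set, with ρ, ρ' their spectral radii and x, y corresponding nonnegative eigenvectors. Then x^T y · (ρ' − ρ) = Σ_{uv ∈ E(G')\E(G)} (x_u y_v + x_v y_u) − Σ_{uv ∈ E(G)\E(G')} (x_u y_v + x_v y_u). -/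
/-!
The edge sum over `E(G)` is the bilinear form `xᵀ A(G) y`, because every edge carries two darts.
Since `A(G)` is symmetric, `xᵀ A(G) y = (A(G) x)ᵀ y = ρ xᵀy`, while `xᵀ A(G') y = ρ' xᵀy`;
the edges common to `G` and `G'` cancel in the difference.
-/

open SimpleGraph Finset Matrix

namespace SimpleGraph

variable {V M : Type*} [Fintype V] (G : SimpleGraph V) [DecidableRel G.Adj] [AddCommMonoid M]

theorem sum_dart_eq_sum_sum_ite_adj (f : V → V → M) :
    ∑ d : G.Dart, f d.fst d.snd = ∑ u, ∑ v, if G.Adj u v then f u v else 0 := by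
  rw [← sum_product' univ univ fun u v => if G.Adj u v then f u v else 0, ← sum_filter]
  exact sum_bij (fun d _ => d.toProd) (fun d _ => by simp [d.adj])
    (fun _ _ _ _ h => Dart.toProd_injective h)
    (fun p hp => ⟨⟨p, (mem_filter.1 hp).2⟩, mem_univ _, rfl⟩) (fun _ _ => rfl)

theorem sum_edgeFinset_lift_add_swap (f : V → V → M) :
    ∑ e ∈ G.edgeFinset, Sym2.lift ⟨fun u v => f u v + f v u, fun _ _ => add_comm _ _⟩ e =
      ∑ d : G.Dart, f d.fst d.snd := by
  classical
  rw [← sum_fiberwise_of_maps_to (t := G.edgeFinset) (g := Dart.edge)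
    fun d _ => mem_edgeFinset.2 d.edge_mem]
  refine sum_congr rfl fun e he => ?_
  induction e with | _ u v =>
  let d : G.Dart := ⟨(u, v), mem_edgeFinset.1 he⟩
  change _ = ∑ d' ∈ univ with (d' : G.Dart).edge = d.edge, _
  rw [Dart.edge_fiber, sum_pair d.symm_ne.symm]
  rfl

theorem sum_edgeFinset_lift_eq_dotProduct_mulVec_adjMatrix {R : Type*} [NonAssocSemiring R]
    (x y : V → R) :
    ∑ e ∈ G.edgeFinset,
        Sym2.lift ⟨fun u v => x u * y v + x v * y u, fun _ _ => add_comm _ _⟩ e =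
      x ⬝ᵥ G.adjMatrix R *ᵥ y := by
  rw [dotProduct_mulVec_adjMatrix]
  exact (G.sum_edgeFinset_lift_add_swap fun u v => x u * y v).trans
    (G.sum_dart_eq_sum_sum_ite_adj fun u v => x u * y v)

end SimpleGraph

theorem Matrix.IsSymm.dotProduct_mulVec_of_mulVec_eq_smul {n R : Type*} [Fintype n]
    [CommSemiring R] {A : Matrix n n R} (hA : A.IsSymm) {ρ : R} {x : n → R}
    (hx : A *ᵥ x = ρ • x) (y : n → R) :
    x ⬝ᵥ A *ᵥ y = ρ * (x ⬝ᵥ y) := by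
  rw [dotProduct_mulVec, ← mulVec_transpose, hA.eq, hx, smul_dotProduct, smul_eq_mul]

/-- Rowlinson's double-eigenvector identity: if `x, y` are nonnegative eigenvectors of
`G, G'` with eigenvalues `ρ, ρ'`, then
`xᵀy·(ρ' - ρ) = ∑_{uv ∈ E(G')\E(G)} (x_u y_v + x_v y_u) - ∑_{uv ∈ E(G)\E(G')} (x_u y_v + x_v y_u)`. -/
theorem double_eigenvector_identity {V : Type*} [Fintype V] [DecidableEq V]
    (G G' : SimpleGraph V) [DecidableRel G.Adj] [DecidableRel G'.Adj]
    (ρ ρ' : ℝ) (x y : V → ℝ)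
    (hex : (G.adjMatrix ℝ).mulVec x = ρ • x)
    (hey : (G'.adjMatrix ℝ).mulVec y = ρ' • y) :
    (∑ v : V, x v * y v) * (ρ' - ρ) =
      (∑ e ∈ G'.edgeFinset \ G.edgeFinset,
        Sym2.lift ⟨fun u v => x u * y v + x v * y u, fun u v => by ring⟩ e)
      - (∑ e ∈ G.edgeFinset \ G'.edgeFinset,
        Sym2.lift ⟨fun u v => x u * y v + x v * y u, fun u v => by ring⟩ e) := by
  rw [sum_sdiff_sub_sum_sdiff, G'.sum_edgeFinset_lift_eq_dotProduct_mulVec_adjMatrix,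
    G.sum_edgeFinset_lift_eq_dotProduct_mulVec_adjMatrix, hey, dotProduct_smul,
    G.isSymm_adjMatrix.dotProduct_mulVec_of_mulVec_eq_smul hex, smul_eq_mul, dotProduct]
  ring
end

section
/- Let n₁ ≥ n₂ ≥ … ≥ n_r be positive integers summing to n with n₁ − n_r ≥ 2, and let K = K(n₁,…,n_r) be the complete r-partite graph with these part sizes. Then there is a constant γ > 0 (depending only on r) such that ρ(T_{n,r}) − ρ(K) ≥ γ/n for all sufficiently large n. -/
open SimpleGraph Finset

/-- The spectral radius (largest adjacency eigenvalue) of a graph. -/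
noncomputable def specRad {V : Type*} [Fintype V] [DecidableEq V] (G : SimpleGraph V) : ℝ := by
  classical
  have h : (G.adjMatrix ℝ).IsHermitian := by
    rw [Matrix.IsHermitian, Matrix.conjTranspose_eq_transpose_of_trivial]
    exact G.isSymm_adjMatrix
  exact ⨆ i, h.eigenvalues i

/-!
The spectral radius of the complete multipartite graph with part sizes `f` is the positive root
of `multipartiteSecular f x = ∑ i, f i / (x + f i) = 1`: testing the adjacency matrix against
`v ↦ 1 / (x + f (p v))` gives `ρ ≤ x` when the sum is at most `1` (Collatz–Wielandt) and `ρ ≥ x`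
when it is at least `1` (Rayleigh quotient).

The function `t ↦ t / (x + t)` is concave; on the integers it lies below its chord through
`q = n / r` and `q + 1`, by at least `2x / ((x + t)(x + q)(x + q + 1))` away from `{q, q + 1}`.
The Turán part sizes all lie in `{q, q + 1}` and have the same total as `f`, so at the root `μ` of
the Turán graph the sum for an unbalanced `f` falls short of `1` by order `1 / n²`. The sum is
`n / x²`-Lipschitz in `x`, so it stays below `1` at `μ - γ / n`, whence `ρ(K) ≤ μ - γ / n`.
-/

open Matrix

namespace Matrix

variable {V : Type*} [Fintype V]

theorem abs_le_of_mulVec_eq_smul {A : Matrix V V ℝ} (hA : ∀ v w, 0 ≤ A v w)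
    {y : V → ℝ} (hy : ∀ v, 0 < y v) {c : ℝ} (hAy : ∀ v, (A *ᵥ y) v ≤ c * y v)
    {x : V → ℝ} (hx : x ≠ 0) {μ : ℝ} (hAx : A *ᵥ x = μ • x) : |μ| ≤ c := by
  obtain ⟨u, hu⟩ := Function.ne_iff.mp hx
  obtain ⟨v, -, hv⟩ := exists_max_image univ (fun w => |x w| / y w) ⟨u, mem_univ u⟩
  set s := |x v| / y v
  have hxs : ∀ w, |x w| ≤ s * y w := fun w =>
    (div_le_iff₀ (hy w)).mp (hv w (mem_univ w))
  have hsv : s * y v = |x v| := div_mul_cancel₀ _ (hy v).ne'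
  have hxv : 0 < |x v| := by
    have := (div_pos (abs_pos.mpr hu) (hy u)).trans_le (hv u (mem_univ u))
    exact hsv ▸ mul_pos this (hy v)
  refine le_of_mul_le_mul_right ?_ hxv
  calc |μ| * |x v| = |(A *ᵥ x) v| := by rw [hAx, Pi.smul_apply, smul_eq_mul, abs_mul]
    _ ≤ ∑ w, A v w * |x w| := by
      refine (abs_sum_le_sum_abs _ _).trans_eq (sum_congr rfl fun w _ => ?_)
      rw [abs_mul, abs_of_nonneg (hA v w)]
    _ ≤ ∑ w, A v w * (s * y w) := by gcongr with w _; exacts [hA v w, hxs w]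
    _ = s * (A *ᵥ y) v := by
      simp only [mulVec, dotProduct, mul_sum]
      exact sum_congr rfl fun w _ => by ring
    _ ≤ s * (c * y v) := mul_le_mul_of_nonneg_left (hAy v) (div_nonneg (abs_nonneg _) (hy v).le)
    _ = c * |x v| := by rw [← hsv]; ring

variable [DecidableEq V]

theorem IsHermitian.eigenvalues_le_of_mulVec_le {A : Matrix V V ℝ} (hA : A.IsHermitian)
    (hA₀ : ∀ v w, 0 ≤ A v w) {y : V → ℝ} (hy : ∀ v, 0 < y v) {c : ℝ}
    (hAy : ∀ v, (A *ᵥ y) v ≤ c * y v) (i : V) : hA.eigenvalues i ≤ c :=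
  (le_abs_self _).trans <| abs_le_of_mulVec_eq_smul hA₀ hy hAy
    ((WithLp.ofLp_eq_zero 2).ne.mpr (hA.eigenvectorBasis.orthonormal.ne_zero i))
    (hA.mulVec_eigenvectorBasis i)

theorem IsHermitian.dotProduct_mulVec_le {A : Matrix V V ℝ} (hA : A.IsHermitian) (z : V → ℝ) :
    z ⬝ᵥ A *ᵥ z ≤ (⨆ i, hA.eigenvalues i) * (z ⬝ᵥ z) := by
  set U : Matrix V V ℝ := (hA.eigenvectorUnitary : Matrix V V ℝ)
  set w := Uᵀ *ᵥ z
  have hUUt : U * Uᵀ = 1 := by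
    simpa [U, star_eq_conjTranspose] using (mem_unitaryGroup_iff.mp hA.eigenvectorUnitary.2)
  have hz : ∀ u, z ⬝ᵥ U *ᵥ u = w ⬝ᵥ u := fun u => by
    rw [dotProduct_mulVec, ← mulVec_transpose]
  have hzz : z ⬝ᵥ z = ∑ i, w i * w i := by
    calc z ⬝ᵥ z = z ⬝ᵥ U *ᵥ w := by rw [mulVec_mulVec, hUUt, one_mulVec]
      _ = ∑ i, w i * w i := hz w
  have hAz : z ⬝ᵥ A *ᵥ z = ∑ i, hA.eigenvalues i * (w i * w i) := by
    conv_lhs => rw [hA.spectral_theorem, Unitary.conjStarAlgAut_apply]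
    rw [← mulVec_mulVec, ← mulVec_mulVec, hz]
    simp [w, U, dotProduct, mulVec_diagonal, star_eq_conjTranspose, mul_left_comm]
  rw [hzz, hAz, mul_sum]
  gcongr with i
  · exact mul_self_nonneg _
  · exact le_ciSup (Set.finite_range _).bddAbove i

end Matrix

section SpectralRadius

variable {V : Type*} [Fintype V] [DecidableEq V] (G : SimpleGraph V) [DecidableRel G.Adj]

theorem specRad_eq_iSup : specRad G = ⨆ i, (G.isHermitian_adjMatrix ℝ).eigenvalues i := by
  unfold specRad
  congr!

variable {G} [Nonempty V] {y : V → ℝ}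

theorem specRad_le_of_sum_neighborFinset_le (hy : ∀ v, 0 < y v) {c : ℝ}
    (h : ∀ v, ∑ w ∈ G.neighborFinset v, y w ≤ c * y v) : specRad G ≤ c := by
  rw [specRad_eq_iSup]
  refine ciSup_le fun i => (G.isHermitian_adjMatrix ℝ).eigenvalues_le_of_mulVec_le
    (fun v w => ?_) hy (fun v => ?_) i
  · rw [adjMatrix_apply]; split_ifs <;> norm_num
  · rw [adjMatrix_mulVec_apply]; exact h v

theorem le_specRad_of_le_sum_neighborFinset (hy : ∀ v, 0 < y v) {c : ℝ}
    (h : ∀ v, c * y v ≤ ∑ w ∈ G.neighborFinset v, y w) : c ≤ specRad G := by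
  have hyy : 0 < y ⬝ᵥ y :=
    sum_pos (fun v _ => mul_self_pos.mpr (hy v).ne') univ_nonempty
  refine le_of_mul_le_mul_right ?_ hyy
  calc c * (y ⬝ᵥ y) = ∑ v, y v * (c * y v) := by
        simp only [dotProduct, mul_sum]; exact sum_congr rfl fun v _ => by ring
    _ ≤ y ⬝ᵥ G.adjMatrix ℝ *ᵥ y := by
        refine sum_le_sum fun v _ => ?_
        rw [adjMatrix_mulVec_apply]
        exact mul_le_mul_of_nonneg_left (h v) (hy v).le
    _ ≤ specRad G * (y ⬝ᵥ y) := by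
        rw [specRad_eq_iSup]; exact (G.isHermitian_adjMatrix ℝ).dotProduct_mulVec_le y

end SpectralRadius

noncomputable def multipartiteSecular {ι : Type*} [Fintype ι] (f : ι → ℕ) (x : ℝ) : ℝ :=
  ∑ i, (f i : ℝ) / (x + f i)

section CompleteMultipartite

variable {V ι : Type*} [Fintype V] [Fintype ι] [DecidableEq ι]
  {p : V → ι} {f : ι → ℕ}

theorem sum_comp_eq_sum_card_mul (hp : ∀ i, #{v | p v = i} = f i) (F : ι → ℝ) :
    ∑ v, F (p v) = ∑ i, (f i : ℝ) * F i := by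
  rw [← sum_fiberwise univ p]
  refine sum_congr rfl fun i _ => ?_
  rw [sum_congr rfl fun v hv => by rw [(mem_filter.mp hv).2], sum_const, nsmul_eq_mul, hp i]

theorem sum_neighborFinset_comap_top (hp : ∀ i, #{v | p v = i} = f i) (F : ι → ℝ) (v : V) :
    ∑ w ∈ ((⊤ : SimpleGraph ι).comap p).neighborFinset v, F (p w)
      = ∑ i, (f i : ℝ) * F i - f (p v) * F (p v) := by
  have hsplit := sum_filter_add_sum_filter_not univ (fun w => p w = p v) (fun w => F (p w))
  have hfiber : ∑ w with p w = p v, F (p w) = f (p v) * F (p v) := by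
    rw [sum_congr rfl fun w hw => by rw [(mem_filter.mp hw).2], sum_const, nsmul_eq_mul, hp]
  have hnbr : ((⊤ : SimpleGraph ι).comap p).neighborFinset v = univ.filter (¬p · = p v) := by
    ext w; simp [eq_comm]
  rw [hnbr, ← sum_comp_eq_sum_card_mul hp, ← hsplit, hfiber]
  ring

variable {x : ℝ}

theorem sum_neighborFinset_comap_top_inv (hp : ∀ i, #{v | p v = i} = f i) (hx : 0 < x) (v : V) :
    ∑ w ∈ ((⊤ : SimpleGraph ι).comap p).neighborFinset v, (x + f (p w))⁻¹
      = multipartiteSecular f x - 1 + x * (x + f (p v))⁻¹ := by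
  have hpos : 0 < x + f (p v) := by positivity
  rw [sum_neighborFinset_comap_top hp (fun i => (x + f i)⁻¹), multipartiteSecular]
  simp only [div_eq_mul_inv]
  field_simp
  ring

variable [DecidableEq V] [Nonempty V]

theorem specRad_comap_top_le (hp : ∀ i, #{v | p v = i} = f i) (hx : 0 < x)
    (h : multipartiteSecular f x ≤ 1) : specRad ((⊤ : SimpleGraph ι).comap p) ≤ x :=
  specRad_le_of_sum_neighborFinset_le (y := fun w => (x + f (p w))⁻¹) (fun _ => by positivity)
    fun v => by rw [sum_neighborFinset_comap_top_inv hp hx]; linarith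

theorem le_specRad_comap_top (hp : ∀ i, #{v | p v = i} = f i) (hx : 0 < x)
    (h : 1 ≤ multipartiteSecular f x) : x ≤ specRad ((⊤ : SimpleGraph ι).comap p) :=
  le_specRad_of_le_sum_neighborFinset (y := fun w => (x + f (p w))⁻¹) (fun _ => by positivity)
    fun v => by rw [sum_neighborFinset_comap_top_inv hp hx]; linarith

end CompleteMultipartite

section Secular

variable {ι : Type*} [Fintype ι] {f : ι → ℕ} {x : ℝ}

theorem multipartiteSecular_le_sum_div (hx : 0 < x) :
    multipartiteSecular f x ≤ (∑ i, f i : ℕ) / x := by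
  rw [Nat.cast_sum, sum_div]
  exact sum_le_sum fun i _ => div_le_div_of_nonneg_left (by positivity) hx (by simp)

theorem le_sum_of_one_le_multipartiteSecular (hx : 0 < x) (h : 1 ≤ multipartiteSecular f x) :
    x ≤ (∑ i, f i : ℕ) := by
  have := h.trans (multipartiteSecular_le_sum_div hx)
  rwa [le_div_iff₀ hx, one_mul] at this

theorem sum_le_add_of_multipartiteSecular_le_one {M : ℕ} (hM : ∀ i, f i ≤ M) (hx : 0 < x)
    (h : multipartiteSecular f x ≤ 1) : (∑ i, f i : ℕ) ≤ x + M := by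
  have hdiv : (∑ i, f i : ℕ) / (x + M) ≤ multipartiteSecular f x := by
    rw [Nat.cast_sum, sum_div]
    exact sum_le_sum fun i _ =>
      div_le_div_of_nonneg_left (by positivity) (by positivity) (by simpa using hM i)
  rw [← div_le_one (by positivity)]
  exact hdiv.trans h

theorem multipartiteSecular_le_add {y : ℝ} (hx : 0 < x) (hxy : x ≤ y) :
    multipartiteSecular f x ≤ multipartiteSecular f y + (y - x) * (∑ i, f i : ℕ) / x ^ 2 := by
  rw [Nat.cast_sum, mul_sum, sum_div, multipartiteSecular, multipartiteSecular, ← sum_add_distrib]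
  refine sum_le_sum fun i _ => ?_
  have hfi : (0 : ℝ) ≤ f i := by positivity
  have hxf : 0 < x + f i := by positivity
  have hyf : 0 < y + f i := by linarith
  have hdiff : (f i : ℝ) / (x + f i) - f i / (y + f i)
      = (y - x) * f i / ((x + f i) * (y + f i)) := by
    field_simp; ring
  have hle : (y - x) * f i / ((x + f i) * (y + f i)) ≤ (y - x) * f i / x ^ 2 :=
    div_le_div_of_nonneg_left (mul_nonneg (by linarith) hfi) (by positivity) (by nlinarith)
  linarith

theorem exists_multipartiteSecular_eq_one (hf : ∀ i, 0 < f i) (hι : 1 < Fintype.card ι) :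
    ∃ x, 0 < x ∧ multipartiteSecular f x = 1 := by
  set B : ℝ := (∑ i, f i : ℕ) + 1
  have hB : 0 < B := by positivity
  have hcont : ContinuousOn (multipartiteSecular f) (Set.Icc 0 B) :=
    continuousOn_finsetSum _ fun i _ =>
      continuousOn_const.div (continuousOn_id.add continuousOn_const) fun y hy => by
        have := hf i; have := hy.1; positivity
  have h0 : multipartiteSecular f 0 = Fintype.card ι := by
    simp only [multipartiteSecular, zero_add]
    rw [sum_congr rfl fun i _ => div_self (by exact_mod_cast (hf i).ne'), sum_const, card_univ,
      nsmul_one]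
  have hBlt : multipartiteSecular f B < 1 :=
    (multipartiteSecular_le_sum_div hB).trans_lt ((div_lt_one hB).mpr (lt_add_one _))
  obtain ⟨x, hx, hx1⟩ := intermediate_value_Icc' hB.le hcont
    ⟨hBlt.le, h0 ▸ (by exact_mod_cast hι.le)⟩
  refine ⟨x, lt_of_le_of_ne hx.1 ?_, hx1⟩
  rintro rfl
  rw [h0] at hx1
  exact hι.ne' (by exact_mod_cast hx1)

/-- Since `t / (x + t) = 1 - x / (x + t)`, this is the height of the convex function `x / (x + t)`
above its chord through `t = q` and `t = q + 1`. -/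
noncomputable def chordDefect (x q t : ℝ) : ℝ :=
  x * ((t - q) * (t - q - 1)) / ((x + t) * (x + q) * (x + q + 1))

theorem div_add_chordDefect (hx : 0 < x) {q t : ℝ} (hq : 0 ≤ q) (ht : 0 ≤ t) :
    t / (x + t) + chordDefect x q t
      = 1 - x / (x + q) + (t - q) * (x / ((x + q) * (x + q + 1))) := by
  have : 0 < x + t := by positivity
  have : 0 < x + q := by positivity
  have : 0 < x + q + 1 := by positivity
  unfold chordDefect
  field_simp
  ring

theorem chordDefect_nonneg (hx : 0 < x) (q t : ℕ) : 0 ≤ chordDefect x q t := by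
  have hprod : (0 : ℝ) ≤ (t - q) * (t - q - 1) := by
    rcases le_or_gt t q with h | h
    · have : (t : ℝ) ≤ q := by exact_mod_cast h
      nlinarith
    · have : (q : ℝ) + 1 ≤ t := by exact_mod_cast h
      nlinarith
  unfold chordDefect
  positivity

theorem le_chordDefect (hx : 0 < x) {q t : ℕ} (hq : t ≠ q) (hq1 : t ≠ q + 1) :
    2 * x / ((x + t) * (x + q) * (x + q + 1)) ≤ chordDefect x q t := by
  have hprod : (2 : ℝ) ≤ (t - q) * (t - q - 1) := by
    rcases lt_or_gt_of_ne hq with h | h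
    · have : (t : ℝ) + 1 ≤ q := by exact_mod_cast h
      nlinarith
    · have : (q : ℝ) + 2 ≤ t := by exact_mod_cast (by omega : q + 2 ≤ t)
      nlinarith
  unfold chordDefect
  rw [mul_comm 2 x]
  gcongr

theorem multipartiteSecular_add_chordDefect_le {g : ι → ℕ} {q : ℕ} (hx : 0 < x)
    (hsum : ∑ i, f i = ∑ i, g i) (hg : ∀ i, g i = q ∨ g i = q + 1) (k : ι) :
    multipartiteSecular f x + chordDefect x q (f k) ≤ multipartiteSecular g x := by
  set c := x / ((x + q) * (x + q + 1))
  have hchord : ∀ h : ι → ℕ, multipartiteSecular h x + ∑ i, chordDefect x q (h i)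
      = ∑ i, (1 - x / (x + q) + ((h i : ℝ) - q) * c) := fun h => by
    rw [multipartiteSecular, ← sum_add_distrib]
    exact sum_congr rfl fun i _ => div_add_chordDefect hx (by positivity) (by positivity)
  have hline : ∑ i, (1 - x / (x + q) + ((f i : ℝ) - q) * c)
      = ∑ i, (1 - x / (x + q) + ((g i : ℝ) - q) * c) := by
    simp only [sum_add_distrib, ← sum_mul, sum_sub_distrib, ← Nat.cast_sum, hsum]
  have hg0 : ∑ i, chordDefect x q (g i) = 0 :=
    sum_eq_zero fun i _ => by rcases hg i with h | h <;> simp [chordDefect, h]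
  have hk : chordDefect x q (f k) ≤ ∑ i, chordDefect x q (f i) :=
    single_le_sum (fun i _ => chordDefect_nonneg hx q (f i)) (mem_univ k)
  linarith [hchord f, hchord g]

end Secular

section Turan

variable {n r : ℕ}

theorem turanGraph_eq_comap_top (hr : 0 < r) :
    turanGraph n r
      = (⊤ : SimpleGraph (Fin r)).comap fun v : Fin n => ⟨v % r, Nat.mod_lt _ hr⟩ := by
  ext v w
  simp [turanGraph_adj, Fin.ext_iff]

theorem card_filter_mod_eq (hr : 0 < r) (i : Fin r) :
    #{v : Fin n | (⟨v % r, Nat.mod_lt _ hr⟩ : Fin r) = i} = n / r ∨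
      #{v : Fin n | (⟨v % r, Nat.mod_lt _ hr⟩ : Fin r) = i} = n / r + 1 := by
  suffices #{v : Fin n | (⟨v % r, Nat.mod_lt _ hr⟩ : Fin r) = i}
      = n / r + if (i : ℕ) < n % r then 1 else 0 by
    rw [this]; split_ifs <;> simp
  rw [← Nat.mod_eq_of_lt i.2, ← Nat.count_modEq_card n hr, Nat.count_eq_card_filter_range]
  refine card_bij (fun v _ => v.val) (fun v hv => ?_) (fun v _ w _ => Fin.ext)
    fun k hk => ?_
  · simp only [mem_filter, mem_univ, true_and, Fin.ext_iff] at hv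
    simp [Nat.ModEq, hv, Nat.mod_eq_of_lt i.2]
  · obtain ⟨hkn, hki⟩ := mem_filter.mp hk
    refine ⟨⟨k, mem_range.mp hkn⟩, ?_, rfl⟩
    simpa [Fin.ext_iff, Nat.ModEq, Nat.mod_eq_of_lt i.2] using hki

end Turan

/-- The constant `1 / 256` is chosen so that the loss `(1 / 256) / x ^ 2 ≤ 1 / (16 n²)` from
lowering `μ` to `x = μ - 1 / (256 n)` is covered by the chord defect, which is at least
`1 / (16 n²)`. -/
theorem multipartiteSecular_le_one_of_unbalanced {ι : Type*} [Fintype ι] {f g : ι → ℕ}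
    {n q : ℕ} {μ : ℝ} (hf : ∑ i, f i = n) (hg : ∑ i, g i = n)
    (hgq : ∀ i, g i = q ∨ g i = q + 1) {k : ι} (hfk : f k ≠ q ∧ f k ≠ q + 1) (hq : q + 1 ≤ n)
    (hμ : multipartiteSecular g μ = 1) (hμn : μ ≤ n) (hnμ : (n : ℝ) / 4 ≤ μ - 1 / 256 / n) :
    multipartiteSecular f (μ - 1 / 256 / n) ≤ 1 := by
  have hn : (0 : ℝ) < n := by exact_mod_cast (by omega : 0 < n)
  set x := μ - 1 / 256 / n
  have hx : 0 < x := by linarith [div_pos hn (by norm_num : (0 : ℝ) < 4)]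
  have hxμ : x ≤ μ := sub_le_self _ (by positivity)
  have hfkn : (f k : ℝ) ≤ n := by
    exact_mod_cast hf ▸ single_le_sum (fun i _ => Nat.zero_le _) (mem_univ k)
  have hqn : (q : ℝ) + 1 ≤ n := by exact_mod_cast hq
  have hdenom : (x + f k) * (x + q) * (x + q + 1) ≤ 8 * n ^ 3 := by
    calc (x + f k) * (x + q) * (x + q + 1) ≤ (2 * n) * (2 * n) * (2 * n) := by
          gcongr <;> linarith
      _ = 8 * n ^ 3 := by ring
  have hdefect : 1 / 256 / x ^ 2 ≤ chordDefect x q (f k) := by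
    refine le_trans ?_ (le_chordDefect hx hfk.1 hfk.2)
    calc 1 / 256 / x ^ 2 ≤ 1 / 256 / ((n : ℝ) / 4) ^ 2 := by gcongr
      _ = ((n : ℝ) / 2) / (8 * n ^ 3) := by field_simp; ring
      _ ≤ 2 * x / ((x + f k) * (x + q) * (x + q + 1)) :=
          div_le_div₀ (by positivity) (by linarith) (by positivity) hdenom
  have hstep := multipartiteSecular_add_chordDefect_le hx (hf.trans hg.symm) hgq k
  have hlip := multipartiteSecular_le_add (f := g) hx hxμ
  rw [hg, hμ, sub_sub_cancel, div_mul_cancel₀ _ hn.ne'] at hlip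
  linarith

/-- Wang–Kang–Xue spectral gap lemma: if `K` is a complete `r`-partite graph on `n`
vertices with part sizes `f 0 ≥ ⋯ ≥ f (r-1)` and `f 0 - f (r-1) ≥ 2`, then
`ρ(T_{n,r}) - ρ(K) ≥ γ/n` for some constant `γ > 0` depending only on `r`. -/
theorem spectral_gap_unbalanced_multipartite (r : ℕ) (hr : 2 ≤ r) :
    ∃ γ : ℝ, 0 < γ ∧ ∃ N : ℕ, ∀ n ≥ N, ∀ f : Fin r → ℕ,
      (∀ i, 0 < f i) → (∀ i j : Fin r, i ≤ j → f j ≤ f i) →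
      (∑ i, f i) = n →
      f ⟨r - 1, by omega⟩ + 2 ≤ f ⟨0, by omega⟩ →
      ∀ p : Fin n → Fin r, (∀ i, (univ.filter (fun v => p v = i)).card = f i) →
      γ / n ≤ specRad (turanGraph n r) - specRad ((⊤ : SimpleGraph (Fin r)).comap p) := by
  refine ⟨1 / 256, by norm_num, r + 8, fun n hn f _ _ hf hgap p hp => ?_⟩
  have hr0 : 0 < r := by omega
  have : NeZero n := ⟨by omega⟩
  set q := n / r
  have hq : 0 < q := Nat.div_pos (by omega) hr0
  have h2q : q * 2 ≤ n := (Nat.mul_le_mul_left q hr).trans (Nat.div_mul_le_self n r)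
  set t : Fin r → ℕ := fun i => #{v : Fin n | (⟨v % r, Nat.mod_lt _ hr0⟩ : Fin r) = i}
  have ht : ∀ i, t i = q ∨ t i = q + 1 := card_filter_mod_eq hr0
  have ht_sum : ∑ i, t i = n := by
    rw [← card_eq_sum_card_fiberwise fun _ _ => mem_univ _, card_univ, Fintype.card_fin]
  obtain ⟨μ, hμ, hμ1⟩ := exists_multipartiteSecular_eq_one (f := t)
    (fun i => by rcases ht i with h | h <;> omega) (by rw [Fintype.card_fin]; omega)
  have hμn := ht_sum ▸ le_sum_of_one_le_multipartiteSecular hμ hμ1.ge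
  have hnμ : (n : ℝ) / 4 ≤ μ - 1 / 256 / n := by
    have hμq := ht_sum ▸ sum_le_add_of_multipartiteSecular_le_one (M := q + 1)
      (fun i => by rcases ht i with h | h <;> omega) hμ hμ1.le
    have h2q' : (q : ℝ) * 2 ≤ n := by exact_mod_cast h2q
    have hn8 : (8 : ℝ) ≤ n := by exact_mod_cast (by omega : 8 ≤ n)
    have hγ : 1 / 256 / (n : ℝ) ≤ 1 := by rw [div_le_one (by positivity)]; linarith
    push_cast at hμq
    linarith
  obtain ⟨k, hk⟩ : ∃ k, f k ≠ q ∧ f k ≠ q + 1 := by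
    by_contra! h
    have := h ⟨0, by omega⟩; have := h ⟨r - 1, by omega⟩; omega
  have hK := specRad_comap_top_le hp (by linarith [(by positivity : (0 : ℝ) ≤ n)])
    (multipartiteSecular_le_one_of_unbalanced hf ht_sum ht hk (by omega) hμ1 hμn hnμ)
  have hT : μ ≤ specRad (turanGraph n r) := by
    rw [turanGraph_eq_comap_top hr0]; exact le_specRad_comap_top (fun _ => rfl) hμ hμ1.ge
  linarith
end

section
/- Let G be a complete r-partite graph with parts V₁,…,V_r, together with extra edges forming a graph Hᵢ inside each part Vᵢ (with at most k−1 extra edges total). Let ρ be the spectral radius and x the Perron vector of G. Then for each i, the total eigenvector weight outside Vᵢ satisfies ρ·x_V / (ρ + |Vᵢ| + 2e(Hᵢ)/(ρ−k+1)) ≤ x_{\bar Vᵢ} ≤ ρ·x_V / (ρ + |Vᵢ| + 2e(Hᵢ)/ρ), where x_V = Σ_{v} x_v and x_{\bar Vᵢ} = Σ_{v ∉ Vᵢ} x_v. -/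
open SimpleGraph Finset Matrix

/-! For `v ∈ Vᵢ` the eigenvalue equation reads `ρ x_v = x_{V̄ᵢ} + ∑_{u ∼_H v} x_u`, because `v` is
joined to all of `V̄ᵢ` and its other neighbours lie in `Vᵢ`. Hence every entry on `Vᵢ` is at least
`x_{V̄ᵢ}/ρ`, and at most `x_{V̄ᵢ}/(ρ-k+1)`: at a maximal entry of `Vᵢ` the `H`-sum is at most
`k-1` times that entry. Summing the equation over `Vᵢ` gives
`ρ x_V = (ρ + |Vᵢ|) x_{V̄ᵢ} + ∑_{v ∈ Vᵢ} ∑_{u ∼_H v} x_u`, and the double sum has `2e(Hᵢ)` terms,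
each within these bounds. -/

theorem div_le_and_le_div_of_eq_mul_add {T a c W E d₁ d₂ : ℝ} (ha : 0 < a) (hE : 0 ≤ E)
    (hd₁ : 0 < d₁) (hd₂ : 0 < d₂) (hT : T = a * c + W) (hW₁ : W ≤ E * (c / d₁))
    (hW₂ : E * (c / d₂) ≤ W) : T / (a + E / d₁) ≤ c ∧ c ≤ T / (a + E / d₂) := by
  constructor
  · rw [div_le_iff₀ (by positivity)]
    linarith [mul_div_assoc E c d₁, div_mul_eq_mul_div E d₁ c]
  · rw [le_div_iff₀ (by positivity)]
    linarith [mul_div_assoc E c d₂, div_mul_eq_mul_div E d₂ c]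

namespace SimpleGraph

variable {V : Type*} [Fintype V] {H : SimpleGraph V} [DecidableRel H.Adj] {S : Finset V}

theorem sum_degrees_eq_twice_ncard_edges_inside (hS : ∀ u v, H.Adj u v → u ∈ S → v ∈ S) :
    ∑ v ∈ S, H.degree v = 2 * {e ∈ H.edgeSet | ∀ v ∈ e, v ∈ S}.ncard := by
  classical
  -- deleting the edges that leave `S` keeps the degrees on `S` and isolates every vertex off `S`
  let H' := H.deleteEdges {e | ¬ ∀ v ∈ e, v ∈ S}
  have hedges : H'.edgeSet = {e ∈ H.edgeSet | ∀ v ∈ e, v ∈ S} := by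
    ext e; simp [H', edgeSet_deleteEdges]
  have hnbr : ∀ v, H'.neighborFinset v = if v ∈ S then H.neighborFinset v else ∅ := by
    intro v
    ext u
    split_ifs with hv
    · simpa [H', hv] using fun h => hS v u h hv
    · simp [H', hv]
  have hdeg : ∀ v, H'.degree v = if v ∈ S then H.degree v else 0 := by
    intro v
    rw [← card_neighborFinset_eq_degree, hnbr]
    split_ifs <;> simp
  rw [← hedges, ← coe_edgeFinset, Set.ncard_coe_finset, ← sum_degrees_eq_twice_card_edges]
  simp [hdeg, Finset.sum_ite_mem]

variable {x : V → ℝ}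

theorem sum_sum_neighborFinset_le (hS : ∀ u v, H.Adj u v → u ∈ S → v ∈ S) {b : ℝ}
    (hb : ∀ u ∈ S, x u ≤ b) :
    ∑ v ∈ S, ∑ u ∈ H.neighborFinset v, x u ≤ (∑ v ∈ S, (H.degree v : ℝ)) * b := by
  rw [sum_mul]
  refine sum_le_sum fun v hv => ?_
  rw [← card_neighborFinset_eq_degree, ← nsmul_eq_mul]
  exact sum_le_card_nsmul _ _ b fun u hu => hb u (hS v u ((mem_neighborFinset ..).1 hu) hv)

theorem le_sum_sum_neighborFinset (hS : ∀ u v, H.Adj u v → u ∈ S → v ∈ S) {a : ℝ}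
    (ha : ∀ u ∈ S, a ≤ x u) :
    (∑ v ∈ S, (H.degree v : ℝ)) * a ≤ ∑ v ∈ S, ∑ u ∈ H.neighborFinset v, x u := by
  rw [sum_mul]
  refine sum_le_sum fun v hv => ?_
  rw [← card_neighborFinset_eq_degree, ← nsmul_eq_mul]
  exact card_nsmul_le_sum _ _ a fun u hu => ha u (hS v u ((mem_neighborFinset ..).1 hu) hv)

variable {ρ c : ℝ}

theorem mul_le_of_forall_mul_eq_add (hS : ∀ u v, H.Adj u v → u ∈ S → v ∈ S)
    (heq : ∀ v ∈ S, ρ * x v = c + ∑ u ∈ H.neighborFinset v, x u)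
    (hx : ∀ v ∈ S, 0 ≤ x v) {Δ : ℝ} (hΔ : ∀ v ∈ S, (H.degree v : ℝ) ≤ Δ) (hΔρ : Δ ≤ ρ)
    {u : V} (hu : u ∈ S) : (ρ - Δ) * x u ≤ c := by
  obtain ⟨w, hw, hmax⟩ := exists_max_image S x ⟨u, hu⟩
  have hnbr : ∑ y ∈ H.neighborFinset w, x y ≤ Δ * x w :=
    calc ∑ y ∈ H.neighborFinset w, x y ≤ H.degree w * x w := by
          rw [← card_neighborFinset_eq_degree, ← nsmul_eq_mul]
          exact sum_le_card_nsmul _ _ _ fun y hy =>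
            hmax y (hS w y ((mem_neighborFinset ..).1 hy) hw)
      _ ≤ Δ * x w := mul_le_mul_of_nonneg_right (hΔ w hw) (hx w hw)
  calc (ρ - Δ) * x u ≤ (ρ - Δ) * x w := mul_le_mul_of_nonneg_left (hmax u hu) (sub_nonneg.2 hΔρ)
    _ ≤ c := by linarith [heq w hw]

theorem div_le_and_le_div_of_forall_mul_eq_add (hS : ∀ u v, H.Adj u v → u ∈ S → v ∈ S)
    (heq : ∀ v ∈ S, ρ * x v = c + ∑ u ∈ H.neighborFinset v, x u)
    (hx : ∀ v ∈ S, 0 ≤ x v) {Δ : ℝ} (hΔ : ∀ v ∈ S, (H.degree v : ℝ) ≤ Δ) (hρ : 0 < ρ)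
    (hΔρ : Δ < ρ) :
    ρ * (∑ v ∈ S, x v + c) /
        (ρ + #S + 2 * ({e ∈ H.edgeSet | ∀ v ∈ e, v ∈ S}.ncard : ℝ) / (ρ - Δ)) ≤ c ∧
      c ≤ ρ * (∑ v ∈ S, x v + c) /
        (ρ + #S + 2 * ({e ∈ H.edgeSet | ∀ v ∈ e, v ∈ S}.ncard : ℝ) / ρ) := by
  have hdeg : ∑ v ∈ S, (H.degree v : ℝ) = 2 * {e ∈ H.edgeSet | ∀ v ∈ e, v ∈ S}.ncard := by
    exact_mod_cast sum_degrees_eq_twice_ncard_edges_inside hS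
  have hsum : ρ * (∑ v ∈ S, x v + c) =
      (ρ + #S) * c + ∑ v ∈ S, ∑ u ∈ H.neighborFinset v, x u := by
    rw [mul_add, mul_sum, sum_congr rfl heq, sum_add_distrib, sum_const, nsmul_eq_mul]
    ring
  have hup : ∀ u ∈ S, x u ≤ c / (ρ - Δ) := fun u hu => by
    rw [le_div_iff₀ (sub_pos.2 hΔρ), mul_comm]
    exact mul_le_of_forall_mul_eq_add hS heq hx hΔ hΔρ.le hu
  have hlow : ∀ u ∈ S, c / ρ ≤ x u := fun u hu => by
    rw [div_le_iff₀ hρ, mul_comm]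
    linarith [heq u hu, sum_nonneg fun y (hy : y ∈ H.neighborFinset u) =>
      hx y (hS u y ((mem_neighborFinset ..).1 hy) hu)]
  exact div_le_and_le_div_of_eq_mul_add (by positivity) (by positivity) (sub_pos.2 hΔρ) hρ hsum
    (hdeg ▸ sum_sum_neighborFinset_le hS hup) (hdeg ▸ le_sum_sum_neighborFinset hS hlow)

theorem sum_neighborFinset_comap_top_sup {ι : Type*} [DecidableEq ι] (p : V → ι)
    [DecidableRel ((⊤ : SimpleGraph ι).comap p ⊔ H).Adj] (hH : ∀ u v, H.Adj u v → p u = p v)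
    (v : V) :
    ∑ u ∈ ((⊤ : SimpleGraph ι).comap p ⊔ H).neighborFinset v, x u =
      ∑ u ∈ univ.filter (fun u => p u ≠ p v), x u + ∑ u ∈ H.neighborFinset v, x u := by
  classical
  have hdisj : Disjoint (univ.filter (fun u => p u ≠ p v)) (H.neighborFinset v) :=
    Finset.disjoint_left.2 fun u hu hu' => by
      simp only [mem_filter, mem_univ, true_and] at hu
      exact hu (hH v u ((mem_neighborFinset ..).1 hu')).symm
  rw [← sum_union hdisj]
  congr 1
  ext u
  simp [eq_comm]

end SimpleGraph

theorem perron_weight_outside_part_general (n r k : ℕ) (hk : 1 ≤ k)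
    (p : Fin n → Fin r) (H : SimpleGraph (Fin n))
    (hHin : ∀ u v : Fin n, H.Adj u v → p u = p v)
    (hHcard : H.edgeSet.ncard ≤ k - 1)
    (G : SimpleGraph (Fin n))
    (hG : G = (⊤ : SimpleGraph (Fin r)).comap p ⊔ H)
    [DecidableRel G.Adj]
    (ρ : ℝ) (hρ : (k : ℝ) - 1 < ρ)
    (x : Fin n → ℝ) (hx : ∀ v, 0 < x v)
    (heig : (G.adjMatrix ℝ).mulVec x = ρ • x) :
    ∀ i : Fin r,
      ρ * (∑ v : Fin n, x v) /
          (ρ + ((univ.filter (fun v : Fin n => p v = i)).card : ℝ) +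
            2 * (({e ∈ H.edgeSet | ∀ v ∈ e, p v = i} : Set (Sym2 (Fin n))).ncard : ℝ) /
              (ρ - (k : ℝ) + 1))
        ≤ ∑ v ∈ univ.filter (fun v : Fin n => p v ≠ i), x v ∧
      ∑ v ∈ univ.filter (fun v : Fin n => p v ≠ i), x v
        ≤ ρ * (∑ v : Fin n, x v) /
            (ρ + ((univ.filter (fun v : Fin n => p v = i)).card : ℝ) +
              2 * (({e ∈ H.edgeSet | ∀ v ∈ e, p v = i} : Set (Sym2 (Fin n))).ncard : ℝ) / ρ) := by
  classical
  subst hG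
  intro i
  set S := univ.filter (fun v : Fin n => p v = i)
  have hk' : (1 : ℝ) ≤ k := by exact_mod_cast hk
  have hclosed : ∀ u v, H.Adj u v → u ∈ S → v ∈ S := fun u v h hu => by
    simpa [S, hHin u v h] using hu
  have heq : ∀ v ∈ S, ρ * x v =
      ∑ u ∈ univ.filter (fun u => p u ≠ i), x u + ∑ u ∈ H.neighborFinset v, x u := by
    intro v hv
    have := congrFun heig v
    rw [adjMatrix_mulVec_apply, sum_neighborFinset_comap_top_sup p hHin, (mem_filter.1 hv).2]
      at this
    simpa using this.symm
  rw [← coe_edgeFinset, Set.ncard_coe_finset] at hHcard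
  have hdeg : ∀ v ∈ S, (H.degree v : ℝ) ≤ k - 1 := fun v _ => by
    rw [← Nat.cast_one, ← Nat.cast_sub hk]
    exact_mod_cast (degree_le_card_edgeFinset H v).trans hHcard
  have hedges : {e ∈ H.edgeSet | ∀ v ∈ e, p v = i} = {e ∈ H.edgeSet | ∀ v ∈ e, v ∈ S} := by
    simp [S]
  rw [hedges, ← sum_filter_add_sum_filter_not univ (fun v => p v = i), sub_add]
  exact div_le_and_le_div_of_forall_mul_eq_add hclosed heq (fun v _ => (hx v).le) hdeg
    (by linarith) (by linarith)

/-- Eigenvector weight estimate: let `G` be a complete `r`-partite graph (partition `p`)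
together with at most `k-1` extra edges forming a graph `H` inside the parts, let `ρ` be
an eigenvalue with `ρ > k-1` admitting a positive eigenvector `x`. Then for each part
`Vᵢ`, writing `x_V = ∑ x_v`, `x_{V̄ᵢ} = ∑_{v ∉ Vᵢ} x_v`, `nᵢ = |Vᵢ|` and `eᵢ = e(Hᵢ)`,
`ρ·x_V/(ρ + nᵢ + 2eᵢ/(ρ-k+1)) ≤ x_{V̄ᵢ} ≤ ρ·x_V/(ρ + nᵢ + 2eᵢ/ρ)`. -/
theorem perron_weight_outside_part (n r k : ℕ) (hr : 2 ≤ r) (hk : 1 ≤ k)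
    (p : Fin n → Fin r) (H : SimpleGraph (Fin n))
    (hHin : ∀ u v : Fin n, H.Adj u v → p u = p v)
    (hHcard : H.edgeSet.ncard ≤ k - 1)
    (G : SimpleGraph (Fin n))
    (hG : G = (⊤ : SimpleGraph (Fin r)).comap p ⊔ H)
    [DecidableRel G.Adj]
    (ρ : ℝ) (hρ : (k : ℝ) - 1 < ρ)
    (x : Fin n → ℝ) (hx : ∀ v, 0 < x v)
    (heig : (G.adjMatrix ℝ).mulVec x = ρ • x) :
    ∀ i : Fin r,
      ρ * (∑ v : Fin n, x v) /
          (ρ + ((univ.filter (fun v : Fin n => p v = i)).card : ℝ) +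
            2 * (({e ∈ H.edgeSet | ∀ v ∈ e, p v = i} : Set (Sym2 (Fin n))).ncard : ℝ) /
              (ρ - (k : ℝ) + 1))
        ≤ ∑ v ∈ univ.filter (fun v : Fin n => p v ≠ i), x v ∧
      ∑ v ∈ univ.filter (fun v : Fin n => p v ≠ i), x v
        ≤ ρ * (∑ v : Fin n, x v) /
            (ρ + ((univ.filter (fun v : Fin n => p v = i)).card : ℝ) +
              2 * (({e ∈ H.edgeSet | ∀ v ∈ e, p v = i} : Set (Sym2 (Fin n))).ncard : ℝ) / ρ) :=
  perron_weight_outside_part_general n r k hk p H hHin hHcard G hG ρ hρ x hx heig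
end
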